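/- arXiv:1907.09311 — 4 statements merged into one kernel-verified Lean document; each statement's English description precedes it below -/
import Mathlib

section
/- Let 𝒳 = ∏_{i=1}^n 𝒳_i and let p(y|x) be a privacy channel with C_1(ℙ) its individual channel capacity with respect to the set ℙ of all input distributions. Then for every input distribution X ∈ ℙ and every I ⊆ [n] with |I| = k, the output Y satisfies I(X_I; Y) ≤ k · C_1(ℙ); equivalently, the k-group channel capacity satisfies C_k(ℙ) ≤ k · C_1(ℙ). -/
open scoped BigOperators

/-- `p` is a probability mass function on the finite type `Ω`. -/
def IsPMF {Ω : Type*} [Fintype Ω] (p : Ω → ℝ) : Prop :=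
  (∀ x, 0 ≤ p x) ∧ ∑ x, p x = 1

/-- A (privacy) channel: every row is a probability distribution on the output set. -/
def IsChannel {Ω 𝒴 : Type*} [Fintype Ω] [Fintype 𝒴] (W : Ω → 𝒴 → ℝ) : Prop :=
  ∀ x, IsPMF (W x)

/-- Shannon entropy (base 2). -/
noncomputable def entropy {Ω : Type*} [Fintype Ω] (p : Ω → ℝ) : ℝ :=
  -∑ x, p x * Real.logb 2 (p x)

/-- Mutual information (base 2) of a joint distribution on `α × β`. -/
noncomputable def mutualInfo {α β : Type*} [Fintype α] [Fintype β] (j : α × β → ℝ) : ℝ :=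
  ∑ a, ∑ b, j (a, b) *
    Real.logb 2 (j (a, b) / ((∑ b', j (a, b')) * (∑ a', j (a', b))))

/-- Joint distribution of `f(X)` and the output `Y` of channel `U` with input `X ∼ p`. -/
noncomputable def jointMapOut {Ω γ 𝒴 : Type*} [Fintype Ω] [Fintype γ] [DecidableEq γ]
    [Fintype 𝒴] (p : Ω → ℝ) (U : Ω → 𝒴 → ℝ) (f : Ω → γ) : γ × 𝒴 → ℝ :=
  fun z => ∑ x, if f x = z.1 then p x * U x z.2 else 0

/-- The set of all probability distributions on `Ω`. -/
def allPMF (Ω : Type*) [Fintype Ω] : Set (Ω → ℝ) := {p | IsPMF p}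

/-- The set of all probability distributions on `Ω` with Shannon entropy at least `b`. -/
def PMFb (Ω : Type*) [Fintype Ω] (b : ℝ) : Set (Ω → ℝ) := {p | IsPMF p ∧ b ≤ entropy p}

/-- Individual channel capacity of the channel `W` with respect to a set `Δ` of
input distributions: the sup over `X ∈ Δ` and coordinates `i` of `I(X_i; Y)`. -/
noncomputable def indCap {n : ℕ} {𝒳 : Fin n → Type*} [∀ i, Fintype (𝒳 i)]
    [∀ i, DecidableEq (𝒳 i)] {𝒴 : Type*} [Fintype 𝒴]
    (W : (∀ i, 𝒳 i) → 𝒴 → ℝ) (Δ : Set ((∀ i, 𝒳 i) → ℝ)) : ℝ :=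
  sSup {r | ∃ p ∈ Δ, ∃ i : Fin n, r = mutualInfo (jointMapOut p W (fun x => x i))}

/-- Restriction of a tuple to the coordinates in the finite index set `S`. -/
def restr {n : ℕ} {𝒳 : Fin n → Type*} (S : Finset (Fin n)) (x : ∀ i, 𝒳 i) :
    ∀ j : {j // j ∈ S}, 𝒳 j.1 :=
  fun j => x j.1

/-- The `k`-group channel capacity of `W` with respect to a set `Δ` of input
distributions: the sup over `X ∈ Δ` and `I ⊆ [n]` with `|I| = k` of `I(X_I;Y)`. -/
noncomputable def groupCap {n : ℕ} {𝒳 : Fin n → Type*} [∀ i, Fintype (𝒳 i)]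
    [∀ i, DecidableEq (𝒳 i)] {𝒴 : Type*} [Fintype 𝒴]
    (W : (∀ i, 𝒳 i) → 𝒴 → ℝ) (Δ : Set ((∀ i, 𝒳 i) → ℝ)) (k : ℕ) : ℝ :=
  sSup {r | ∃ p ∈ Δ, ∃ S : Finset (Fin n), S.card = k ∧
    r = mutualInfo (jointMapOut p W (restr S))}

/-! ### Auxiliary lemmas -/

section Aux

variable {Ω 𝒴 γ : Type*} [Fintype Ω] [Fintype 𝒴] [Fintype γ] [DecidableEq γ]
  (p : Ω → ℝ) (W : Ω → 𝒴 → ℝ) (f : Ω → γ)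

lemma aux_marg1 (hW : IsChannel W) (z : γ) :
    ∑ y, jointMapOut p W f (z, y) = ∑ x, if f x = z then p x else 0 := by
  unfold jointMapOut
  rw [Finset.sum_comm]
  refine Finset.sum_congr rfl fun x _ => ?_
  by_cases h : f x = z
  · simp only [h, if_true, ← Finset.mul_sum, (hW x).2, mul_one]
  · simp [h]

lemma aux_marg2 (y : 𝒴) :
    ∑ z, jointMapOut p W f (z, y) = ∑ x, p x * W x y := by
  unfold jointMapOut
  rw [Finset.sum_comm]
  refine Finset.sum_congr rfl fun x _ => ?_
  simpa using Finset.sum_ite_eq Finset.univ (f x) (fun _ => p x * W x y)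

lemma aux_grouping (hW : IsChannel W) :
    mutualInfo (jointMapOut p W f) =
      ∑ x, ∑ y, p x * W x y * Real.logb 2 (jointMapOut p W f (f x, y) /
        ((∑ x', if f x' = f x then p x' else 0) * ∑ x', p x' * W x' y)) := by
  unfold mutualInfo
  have key : ∀ z y, jointMapOut p W f (z, y) *
      Real.logb 2 (jointMapOut p W f (z, y) /
        ((∑ y', jointMapOut p W f (z, y')) * (∑ z', jointMapOut p W f (z', y)))) =
      ∑ x, if f x = z then p x * W x y * Real.logb 2 (jointMapOut p W f (z, y) /
        ((∑ x', if f x' = f x then p x' else 0) * ∑ x', p x' * W x' y)) else 0 := by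
    intro z y
    rw [aux_marg1 p W f hW, aux_marg2 p W f]
    show (∑ x, if f x = z then p x * W x y else 0) * _ = _
    rw [Finset.sum_mul]
    refine Finset.sum_congr rfl fun x _ => ?_
    by_cases h : f x = z
    · simp only [h, if_true]
    · simp [h]
  calc (∑ z, ∑ y, jointMapOut p W f (z, y) *
      Real.logb 2 (jointMapOut p W f (z, y) /
        ((∑ y', jointMapOut p W f (z, y')) * (∑ z', jointMapOut p W f (z', y)))))
      = ∑ z, ∑ y, ∑ x, if f x = z then p x * W x y * Real.logb 2 (jointMapOut p W f (z, y) /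
          ((∑ x', if f x' = f x then p x' else 0) * ∑ x', p x' * W x' y)) else 0 :=
        Finset.sum_congr rfl fun z _ => Finset.sum_congr rfl fun y _ => key z y
    _ = ∑ z : γ, ∑ x : Ω, ∑ y : 𝒴, if f x = z then p x * W x y * Real.logb 2
          (jointMapOut p W f (z, y) /
          ((∑ x', if f x' = f x then p x' else 0) * ∑ x', p x' * W x' y)) else 0 :=
        Finset.sum_congr rfl fun z _ => Finset.sum_comm
    _ = ∑ x : Ω, ∑ z : γ, ∑ y : 𝒴, if f x = z then p x * W x y * Real.logb 2
          (jointMapOut p W f (z, y) /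
          ((∑ x', if f x' = f x then p x' else 0) * ∑ x', p x' * W x' y)) else 0 :=
        Finset.sum_comm
    _ = _ := by
      refine Finset.sum_congr rfl fun x _ => ?_
      rw [Finset.sum_comm]
      refine Finset.sum_congr rfl fun y _ => ?_
      simpa using Finset.sum_ite_eq Finset.univ (f x)
        (fun z => p x * W x y * Real.logb 2 (jointMapOut p W f (z, y) /
          ((∑ x', if f x' = f x then p x' else 0) * ∑ x', p x' * W x' y)))

lemma aux_neg_mul_logb_le {t : ℝ} (ht : 0 ≤ t) : t * (- Real.logb 2 t) ≤ 2 := by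
  rcases eq_or_lt_of_le ht with h | h
  · simp [← h]
  · have hlog : Real.log t⁻¹ ≤ 1/t - 1 := by
      simpa [Real.log_inv, one_div] using Real.log_le_sub_one_of_pos (by positivity : 0 < t⁻¹)
    have h1 : t * Real.log t⁻¹ ≤ 1 := by
      have := mul_le_mul_of_nonneg_left hlog ht
      have ht' : t * (1/t - 1) = 1 - t := by field_simp
      nlinarith
    have h2 : (0.6931471803 : ℝ) < Real.log 2 := Real.log_two_gt_d9
    have h3 : t * (- Real.logb 2 t) = t * Real.log t⁻¹ / Real.log 2 := by
      rw [Real.logb, Real.log_inv]; ring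
    rw [h3, div_le_iff₀ (by linarith)]
    nlinarith

lemma aux_mi_le_bound {α β : Type*} [Fintype α] [Fintype β] (j : α × β → ℝ)
    (hj : ∀ z, 0 ≤ j z) : mutualInfo j ≤ 2 * Fintype.card β := by
  unfold mutualInfo
  have step1 : ∀ a b, j (a, b) *
      Real.logb 2 (j (a, b) / ((∑ b', j (a, b')) * (∑ a', j (a', b)))) ≤
      j (a, b) * (- Real.logb 2 (∑ a', j (a', b))) := by
    intro a b
    rcases eq_or_lt_of_le (hj (a, b)) with h | h
    · rw [← h]; simp
    · have hm1 : j (a, b) ≤ ∑ b', j (a, b') :=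
        Finset.single_le_sum (fun b' _ => hj (a, b')) (Finset.mem_univ b)
      have hm2 : j (a, b) ≤ ∑ a', j (a', b) :=
        Finset.single_le_sum (fun a' _ => hj (a', b)) (Finset.mem_univ a)
      have hm1p : (0:ℝ) < ∑ b', j (a, b') := lt_of_lt_of_le h hm1
      have hm2p : (0:ℝ) < ∑ a', j (a', b) := lt_of_lt_of_le h hm2
      refine mul_le_mul_of_nonneg_left ?_ (le_of_lt h)
      rw [← Real.logb_inv]
      apply Real.logb_le_logb_of_le (by norm_num : (1:ℝ) < 2) (by positivity)
      rw [div_le_iff₀ (by positivity)]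
      calc j (a, b) ≤ ∑ b', j (a, b') := hm1
        _ = (∑ a', j (a', b))⁻¹ * ((∑ b', j (a, b')) * ∑ a', j (a', b)) := by
            field_simp
  calc (∑ a, ∑ b, j (a, b) *
      Real.logb 2 (j (a, b) / ((∑ b', j (a, b')) * (∑ a', j (a', b)))))
      ≤ ∑ a, ∑ b, j (a, b) * (- Real.logb 2 (∑ a', j (a', b))) :=
        Finset.sum_le_sum fun a _ => Finset.sum_le_sum fun b _ => step1 a b
    _ = ∑ b, (∑ a, j (a, b)) * (- Real.logb 2 (∑ a', j (a', b))) := by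
        rw [Finset.sum_comm]
        exact Finset.sum_congr rfl fun b _ => (Finset.sum_mul ..).symm
    _ ≤ ∑ b : β, (2:ℝ) :=
        Finset.sum_le_sum fun b _ =>
          aux_neg_mul_logb_le (Finset.sum_nonneg fun a _ => hj (a, b))
    _ = 2 * Fintype.card β := by simp [mul_comm]

lemma aux_jmo_nonneg (hp : ∀ x, 0 ≤ p x) (hW : IsChannel W) (z : γ × 𝒴) :
    0 ≤ jointMapOut p W f z := by
  refine Finset.sum_nonneg fun x _ => ?_
  split
  · exact mul_nonneg (hp x) ((hW x).1 z.2)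
  · exact le_refl 0

lemma aux_mi_subsingleton [Subsingleton γ] (hp : IsPMF p) (hW : IsChannel W) :
    mutualInfo (jointMapOut p W f) = 0 := by
  rw [aux_grouping p W f hW]
  refine Finset.sum_eq_zero fun x _ => Finset.sum_eq_zero fun y _ => ?_
  have hcond : ∀ x' : Ω, f x' = f x := fun x' => Subsingleton.elim _ _
  have hP : (∑ x', if f x' = f x then p x' else 0) = 1 := by
    simp only [hcond, if_true]; exact hp.2
  have hJ : jointMapOut p W f (f x, y) = ∑ x', p x' * W x' y := by
    unfold jointMapOut
    refine Finset.sum_congr rfl fun x' _ => ?_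
    simp [hcond x']
  rcases eq_or_lt_of_le (mul_nonneg (hp.1 x) ((hW x).1 y)) with h | h
  · rw [← h]; simp
  · have hQ : (0:ℝ) < ∑ x', p x' * W x' y :=
      lt_of_lt_of_le h (Finset.single_le_sum
        (fun x' _ => mul_nonneg (hp.1 x') ((hW x').1 y)) (Finset.mem_univ x))
    rw [hJ, hP, one_mul, div_self (ne_of_gt hQ), Real.logb_one, mul_zero]

lemma aux_mi_pointmass [DecidableEq Ω] (x0 : Ω) (hW : IsChannel W) :
    mutualInfo (jointMapOut (fun x => if x = x0 then (1:ℝ) else 0) W f) = 0 := by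
  set p : Ω → ℝ := fun x => if x = x0 then (1:ℝ) else 0 with hpdef
  rw [aux_grouping p W f hW]
  refine Finset.sum_eq_zero fun x _ => Finset.sum_eq_zero fun y _ => ?_
  by_cases hx : x = x0
  · subst hx
    have hQ : (∑ x', p x' * W x' y) = W x y := by
      rw [show (∑ x', p x' * W x' y) = ∑ x', if x' = x then W x' y else 0 from
        Finset.sum_congr rfl fun x' _ => by by_cases h : x' = x <;> simp [hpdef, h]]
      simp [Finset.sum_ite_eq' Finset.univ x (fun x' => W x' y)]
    have hP : (∑ x', if f x' = f x then p x' else 0) = 1 := by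
      rw [show (∑ x', if f x' = f x then p x' else 0) = ∑ x', if x' = x then (1:ℝ) else 0 from
        Finset.sum_congr rfl fun x' _ => by
          by_cases h : x' = x
          · subst h; simp [hpdef]
          · by_cases h2 : f x' = f x <;> simp [hpdef, h, h2]]
      simp
    have hJ : jointMapOut p W f (f x, y) = W x y := by
      unfold jointMapOut
      rw [show (∑ x', if f x' = (f x, y).1 then p x' * W x' (f x, y).2 else 0)
          = ∑ x', if x' = x then W x' y else 0 from
        Finset.sum_congr rfl fun x' _ => by
          by_cases h : x' = x
          · subst h; simp [hpdef]
          · by_cases h2 : f x' = f x <;> simp [hpdef, h, h2]]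
      simp [Finset.sum_ite_eq' Finset.univ x (fun x' => W x' y)]
    rcases eq_or_lt_of_le ((hW x).1 y) with h | h
    · rw [← h]; simp
    · rw [hJ, hP, hQ, one_mul, div_self (ne_of_gt h), Real.logb_one, mul_zero]
  · simp [hpdef, hx]

lemma aux_logb_chain {JA PA JT PT QY : ℝ} (hJA : 0 < JA) (hPA : 0 < PA) (hJT : 0 < JT)
    (hPT : 0 < PT) (hQY : 0 < QY) :
    Real.logb 2 (JA / (PA * QY)) = Real.logb 2 (JT / (PT * QY)) +
      Real.logb 2 ((JA / PT) / ((PA / PT) * (JT / PT))) := by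
  rw [← Real.logb_mul (by positivity : (0:ℝ) < JT / (PT * QY)).ne'
    (by positivity : (0:ℝ) < (JA / PT) / ((PA / PT) * (JT / PT))).ne']
  congr 1
  field_simp

end Aux

lemma aux_pos_sum {Ω : Type*} [Fintype Ω] (g : Ω → ℝ) (hg : ∀ x, 0 ≤ g x)
    (c : Ω → Prop) [DecidablePred c] (x : Ω) (hc : c x) (hgx : 0 < g x) :
    0 < ∑ x', if c x' then g x' else 0 := by
  have h1 : (if c x then g x else 0) ≤ ∑ x', if c x' then g x' else 0 :=
    Finset.single_le_sum (f := fun x' => if c x' then g x' else 0)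
      (fun x' _ => by
        by_cases h : c x'
        · rw [if_pos h]; exact hg x'
        · rw [if_neg h]) (Finset.mem_univ x)
  rw [if_pos hc] at h1
  exact lt_of_lt_of_le hgx h1

section Main

variable {n : ℕ} {𝒳 : Fin n → Type*} [∀ i, Fintype (𝒳 i)] [∀ i, DecidableEq (𝒳 i)]
  {𝒴 : Type*} [Fintype 𝒴]

lemma restr_eq_iff (S : Finset (Fin n)) (x x' : ∀ i, 𝒳 i) :
    restr S x' = restr S x ↔ ∀ j ∈ S, x' j = x j := by
  unfold restr
  rw [funext_iff]
  exact ⟨fun h j hj => h ⟨j, hj⟩, fun h j => h j.1 j.2⟩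

lemma restr_insert_iff (T : Finset (Fin n)) (i : Fin n) (x x' : ∀ i, 𝒳 i) :
    restr (insert i T) x' = restr (insert i T) x ↔
      (x' i = x i ∧ restr T x' = restr T x) := by
  rw [restr_eq_iff, restr_eq_iff]
  constructor
  · intro h
    exact ⟨h i (Finset.mem_insert_self i T), fun j hj => h j (Finset.mem_insert_of_mem hj)⟩
  · rintro ⟨h1, h2⟩ j hj
    rcases Finset.mem_insert.1 hj with h | h
    · subst h; exact h1
    · exact h2 j h

lemma chain_step (p : (∀ i, 𝒳 i) → ℝ) (hp : IsPMF p) (W : (∀ i, 𝒳 i) → 𝒴 → ℝ)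
    (hW : IsChannel W) (T : Finset (Fin n)) (i : Fin n) :
    mutualInfo (jointMapOut p W (restr (insert i T))) =
      mutualInfo (jointMapOut p W (restr T)) +
      ∑ t : (∀ j : {j // j ∈ T}, 𝒳 j.1),
        (if 0 < (∑ x, if restr T x = t then p x else 0) then
          (∑ x, if restr T x = t then p x else 0) *
            mutualInfo (jointMapOut
              (fun x => if restr T x = t then
                p x / (∑ x', if restr T x' = t then p x' else 0) else 0) W (fun x => x i))
        else 0) := by
  classical
  set PT : (∀ j : {j // j ∈ T}, 𝒳 j.1) → ℝ :=
    fun t => ∑ x, if restr T x = t then p x else 0 with hPTdef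
  set pc : (∀ j : {j // j ∈ T}, 𝒳 j.1) → (∀ i, 𝒳 i) → ℝ :=
    fun t x => if restr T x = t then p x / PT t else 0 with hpcdef
  have hPTnonneg : ∀ t, 0 ≤ PT t := fun t =>
    Finset.sum_nonneg fun x _ => by split; exacts [hp.1 x, le_refl 0]
  -- Step 1: rewrite each summand of the t-sum as a double sum
  have claim1 : ∀ t, (if 0 < PT t then
      PT t * mutualInfo (jointMapOut (pc t) W (fun x => x i)) else 0) =
      ∑ x, ∑ y, (if restr T x = t then p x else 0) * W x y *
        Real.logb 2 (jointMapOut (pc t) W (fun x => x i) (x i, y) /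
          ((∑ x', if x' i = x i then pc t x' else 0) * ∑ x', pc t x' * W x' y)) := by
    intro t
    by_cases h : 0 < PT t
    · rw [if_pos h, aux_grouping (pc t) W (fun x => x i) hW, Finset.mul_sum]
      refine Finset.sum_congr rfl fun x _ => ?_
      rw [Finset.mul_sum]
      refine Finset.sum_congr rfl fun y _ => ?_
      have e : PT t * pc t x = (if restr T x = t then p x else 0) := by
        simp only [hpcdef]
        split
        · exact mul_div_cancel₀ _ (ne_of_gt h)
        · exact mul_zero _
      rw [← e]; ring
    · rw [if_neg h]
      have hPT0 : PT t = 0 := le_antisymm (not_lt.1 h) (hPTnonneg t)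
      have hz : ∀ x, (if restr T x = t then p x else 0) = 0 := by
        intro x
        have := (Finset.sum_eq_zero_iff_of_nonneg
          (fun x _ => by split; exacts [hp.1 x, le_refl 0])).1 hPT0
        exact this x (Finset.mem_univ x)
      exact (Finset.sum_eq_zero fun x _ => Finset.sum_eq_zero fun y _ => by
        rw [hz x, zero_mul, zero_mul]).symm
  -- Step 2: the t-sum collapses
  have claim2 : (∑ t, ∑ x, ∑ y, (if restr T x = t then p x else 0) * W x y *
        Real.logb 2 (jointMapOut (pc t) W (fun x => x i) (x i, y) /
          ((∑ x', if x' i = x i then pc t x' else 0) * ∑ x', pc t x' * W x' y))) =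
      ∑ x, ∑ y, p x * W x y *
        Real.logb 2 (jointMapOut (pc (restr T x)) W (fun x => x i) (x i, y) /
          ((∑ x', if x' i = x i then pc (restr T x) x' else 0) *
            ∑ x', pc (restr T x) x' * W x' y)) := by
    rw [Finset.sum_comm]
    refine Finset.sum_congr rfl fun x _ => ?_
    rw [Finset.sum_comm]
    refine Finset.sum_congr rfl fun y _ => ?_
    rw [show (∑ t, (if restr T x = t then p x else 0) * W x y *
        Real.logb 2 (jointMapOut (pc t) W (fun x => x i) (x i, y) /
          ((∑ x', if x' i = x i then pc t x' else 0) * ∑ x', pc t x' * W x' y))) =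
      ∑ t, (if restr T x = t then p x * W x y *
        Real.logb 2 (jointMapOut (pc t) W (fun x => x i) (x i, y) /
          ((∑ x', if x' i = x i then pc t x' else 0) * ∑ x', pc t x' * W x' y)) else 0) from
      Finset.sum_congr rfl fun t _ => by split <;> simp]
    simpa using Finset.sum_ite_eq Finset.univ (restr T x) _
  -- Assemble
  rw [aux_grouping p W (restr (insert i T)) hW, aux_grouping p W (restr T) hW,
    Finset.sum_congr rfl fun t (_ : t ∈ Finset.univ) => claim1 t, claim2,
    ← Finset.sum_add_distrib]
  refine Finset.sum_congr rfl fun x _ => ?_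
  rw [← Finset.sum_add_distrib]
  refine Finset.sum_congr rfl fun y _ => ?_
  -- pointwise chain rule
  rcases eq_or_lt_of_le (mul_nonneg (hp.1 x) ((hW x).1 y)) with hq | hq
  · rw [← hq]; simp
  · have hterm : ∀ (g : (∀ i, 𝒳 i) → ℝ), (∀ x', 0 ≤ g x') →
        ∀ (c : (∀ i, 𝒳 i) → Prop) [DecidablePred c], c x → 0 < g x →
        0 < ∑ x', if c x' then g x' else 0 :=
      fun g hg c _ hc hgx => aux_pos_sum g hg c x hc hgx
    have hJA : (0:ℝ) < jointMapOut p W (restr (insert i T)) (restr (insert i T) x, y) :=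
      hterm _ (fun x' => mul_nonneg (hp.1 x') ((hW x').1 y)) _ rfl hq
    have hPA : (0:ℝ) < ∑ x', if restr (insert i T) x' = restr (insert i T) x
        then p x' else 0 :=
      hterm _ hp.1 _ rfl (lt_of_lt_of_le hq (by
        nlinarith [(hW x).1 y, hp.1 x, ((hW x).2 ▸ Finset.single_le_sum
          (fun y' _ => (hW x).1 y') (Finset.mem_univ y) : W x y ≤ 1)]))
    have hJT : (0:ℝ) < jointMapOut p W (restr T) (restr T x, y) :=
      hterm _ (fun x' => mul_nonneg (hp.1 x') ((hW x').1 y)) _ rfl hq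
    have hpx : 0 < p x := by
      rcases (hp.1 x).lt_or_eq with h | h
      · exact h
      · exfalso; rw [← h] at hq; simp at hq
    have hPT : (0:ℝ) < PT (restr T x) := hterm _ hp.1 _ rfl hpx
    have hQY : (0:ℝ) < ∑ x', p x' * W x' y :=
      lt_of_lt_of_le hq (Finset.single_le_sum
        (fun x' _ => mul_nonneg (hp.1 x') ((hW x').1 y)) (Finset.mem_univ x))
    -- the three conditional identities
    have hJt : jointMapOut (pc (restr T x)) W (fun x => x i) (x i, y) =
        jointMapOut p W (restr (insert i T)) (restr (insert i T) x, y) / PT (restr T x) := by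
      show (∑ x', if x' i = x i then pc (restr T x) x' * W x' y else 0) = _
      rw [show jointMapOut p W (restr (insert i T)) (restr (insert i T) x, y) =
        ∑ x', if restr (insert i T) x' = restr (insert i T) x then p x' * W x' y else 0
        from rfl, Finset.sum_div]
      refine Finset.sum_congr rfl fun x' _ => ?_
      simp only [restr_insert_iff]
      simp only [hpcdef]
      by_cases h1 : x' i = x i <;> by_cases h2 : restr T x' = restr T x <;>
        simp [h1, h2, div_mul_eq_mul_div]
    have hPt : (∑ x', if x' i = x i then pc (restr T x) x' else 0) =
        (∑ x', if restr (insert i T) x' = restr (insert i T) x then p x' else 0) /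
          PT (restr T x) := by
      rw [Finset.sum_div]
      refine Finset.sum_congr rfl fun x' _ => ?_
      simp only [restr_insert_iff]
      simp only [hpcdef]
      by_cases h1 : x' i = x i <;> by_cases h2 : restr T x' = restr T x <;>
        simp [h1, h2]
    have hQt : (∑ x', pc (restr T x) x' * W x' y) =
        jointMapOut p W (restr T) (restr T x, y) / PT (restr T x) := by
      rw [show jointMapOut p W (restr T) (restr T x, y) =
        ∑ x', if restr T x' = restr T x then p x' * W x' y else 0 from rfl, Finset.sum_div]
      refine Finset.sum_congr rfl fun x' _ => ?_
      simp only [hpcdef]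
      by_cases h2 : restr T x' = restr T x <;> simp [h2, div_mul_eq_mul_div]
    rw [hJt, hPt, hQt, ← mul_add]
    congr 1
    exact aux_logb_chain hJA hPA hJT hPT hQY

lemma capSet_bddAbove (W : (∀ i, 𝒳 i) → 𝒴 → ℝ) (hW : IsChannel W) :
    BddAbove {r | ∃ p ∈ allPMF (∀ i, 𝒳 i), ∃ i : Fin n,
      r = mutualInfo (jointMapOut p W (fun x => x i))} := by
  refine ⟨2 * Fintype.card 𝒴, ?_⟩
  rintro r ⟨p, hp, i, rfl⟩
  exact aux_mi_le_bound _ (aux_jmo_nonneg p W _ hp.1 hW)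

lemma mi_restr_le (W : (∀ i, 𝒳 i) → 𝒴 → ℝ) (hW : IsChannel W) (T : Finset (Fin n)) :
    ∀ p, IsPMF p → mutualInfo (jointMapOut p W (restr T)) ≤
      T.card * indCap W (allPMF (∀ i, 𝒳 i)) := by
  induction T using Finset.induction_on with
  | empty =>
    intro p hp
    haveI : IsEmpty {j // j ∈ (∅ : Finset (Fin n))} := ⟨fun j => Finset.notMem_empty j.1 j.2⟩
    rw [aux_mi_subsingleton p W (restr ∅) hp hW]
    simp
  | @insert i T hi ih =>
    intro p hp
    rw [chain_step p hp W hW T i]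
    have hPTnonneg : ∀ t : (∀ j : {j // j ∈ T}, 𝒳 j.1),
        (0:ℝ) ≤ ∑ x, if restr T x = t then p x else 0 := fun t =>
      Finset.sum_nonneg fun x _ => by split; exacts [hp.1 x, le_refl 0]
    have hbdd := capSet_bddAbove W hW
    have h1 : ∀ t : (∀ j : {j // j ∈ T}, 𝒳 j.1),
        (if 0 < (∑ x, if restr T x = t then p x else 0) then
          (∑ x, if restr T x = t then p x else 0) *
            mutualInfo (jointMapOut
              (fun x => if restr T x = t then
                p x / (∑ x', if restr T x' = t then p x' else 0) else 0) W (fun x => x i))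
        else 0) ≤ (∑ x, if restr T x = t then p x else 0) *
          indCap W (allPMF (∀ i, 𝒳 i)) := by
      intro t
      by_cases h : 0 < (∑ x, if restr T x = t then p x else 0)
      · rw [if_pos h]
        refine mul_le_mul_of_nonneg_left ?_ (le_of_lt h)
        refine le_csSup hbdd ⟨_, ?_, i, rfl⟩
        constructor
        · intro x
          dsimp only
          split
          · exact div_nonneg (hp.1 x) (hPTnonneg t)
          · exact le_refl 0
        · rw [show (∑ x, if restr T x = t then
              p x / (∑ x', if restr T x' = t then p x' else 0) else 0) =
            (∑ x, if restr T x = t then p x else 0) /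
              (∑ x', if restr T x' = t then p x' else 0) from by
            rw [Finset.sum_div]
            exact Finset.sum_congr rfl fun x _ => by split <;> simp]
          exact div_self (ne_of_gt h)
      · rw [if_neg h, le_antisymm (not_lt.1 h) (hPTnonneg t), zero_mul]
    have h2 : (∑ t : (∀ j : {j // j ∈ T}, 𝒳 j.1),
        (∑ x, if restr T x = t then p x else 0)) = 1 := by
      rw [Finset.sum_comm]
      rw [show (∑ x : (∀ i, 𝒳 i), ∑ t : (∀ j : {j // j ∈ T}, 𝒳 j.1),
          if restr T x = t then p x else 0) = ∑ x : (∀ i, 𝒳 i), p x from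
        Finset.sum_congr rfl fun x _ => by
          simpa using Finset.sum_ite_eq Finset.univ (restr T x) (fun _ => p x)]
      exact hp.2
    have h3 : (∑ t : (∀ j : {j // j ∈ T}, 𝒳 j.1),
        (if 0 < (∑ x, if restr T x = t then p x else 0) then
          (∑ x, if restr T x = t then p x else 0) *
            mutualInfo (jointMapOut
              (fun x => if restr T x = t then
                p x / (∑ x', if restr T x' = t then p x' else 0) else 0) W (fun x => x i))
        else 0)) ≤ indCap W (allPMF (∀ i, 𝒳 i)) := by
      calc _ ≤ ∑ t : (∀ j : {j // j ∈ T}, 𝒳 j.1),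
            (∑ x, if restr T x = t then p x else 0) * indCap W (allPMF (∀ i, 𝒳 i)) :=
          Finset.sum_le_sum fun t _ => h1 t
        _ = (∑ t : (∀ j : {j // j ∈ T}, 𝒳 j.1),
            (∑ x, if restr T x = t then p x else 0)) * indCap W (allPMF (∀ i, 𝒳 i)) :=
          (Finset.sum_mul ..).symm
        _ = _ := by rw [h2, one_mul]
    have h4 := ih p hp
    rw [Finset.card_insert_of_notMem hi]
    push_cast
    linarith

lemma indCap_nonneg [∀ i, Nonempty (𝒳 i)] (W : (∀ i, 𝒳 i) → 𝒴 → ℝ) (hW : IsChannel W)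
    (i0 : Fin n) : 0 ≤ indCap W (allPMF (∀ i, 𝒳 i)) := by
  classical
  have hne : Nonempty (∀ i, 𝒳 i) := inferInstance
  obtain ⟨x0⟩ := hne
  refine le_csSup (capSet_bddAbove W hW) ?_
  refine ⟨fun x => if x = x0 then (1:ℝ) else 0,
    ⟨fun x => by by_cases h : x = x0 <;> simp [h], by simp⟩,
    i0, (aux_mi_pointmass W (fun x => x i0) x0 hW).symm⟩

end Main

/-- group privacy with respect to `ℙ`: for every input distribution and
every `I` with `|I| = k`, `I(X_I;Y) ≤ k·C₁(ℙ)`; equivalently `C_k(ℙ) ≤ k·C₁(ℙ)`. -/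
theorem group_capacity_le
    {n : ℕ} {𝒳 : Fin n → Type*} [∀ i, Fintype (𝒳 i)] [∀ i, DecidableEq (𝒳 i)]
    [∀ i, Nonempty (𝒳 i)] {𝒴 : Type*} [Fintype 𝒴] [Nonempty 𝒴]
    (W : (∀ i, 𝒳 i) → 𝒴 → ℝ) (hW : IsChannel W) (k : ℕ) (hk : 1 ≤ k) (hkn : k ≤ n) :
    (∀ p, IsPMF p → ∀ S : Finset (Fin n), S.card = k →
        mutualInfo (jointMapOut p W (restr S)) ≤ k * indCap W (allPMF (∀ i, 𝒳 i))) ∧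
      groupCap W (allPMF (∀ i, 𝒳 i)) k ≤ k * indCap W (allPMF (∀ i, 𝒳 i)) := by
  have part1 : ∀ p, IsPMF p → ∀ S : Finset (Fin n), S.card = k →
      mutualInfo (jointMapOut p W (restr S)) ≤ k * indCap W (allPMF (∀ i, 𝒳 i)) := by
    intro p hp S hS
    have := mi_restr_le W hW S p hp
    rwa [hS] at this
  refine ⟨part1, ?_⟩
  refine Real.sSup_le ?_ ?_
  · rintro r ⟨p, hp, S, hS, rfl⟩
    exact part1 p hp S hS
  · exact mul_nonneg (Nat.cast_nonneg k)
      (indCap_nonneg W hW ⟨0, lt_of_lt_of_le hk hkn⟩)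
end

section
/- Let p(y|x) be a privacy channel that is (b,δ)-balanced, i.e. C_1(ℙ) = C_1(ℙ_b) + δ, and suppose it satisfies ε-information privacy with respect to ℙ_b, i.e. C_1(ℙ_b) ≤ ε. Then for every k ∈ [n], the k-group channel capacity with respect to ℙ_b satisfies C_k(ℙ_b) ≤ k(ε + δ); that is, the channel satisfies δ-group privacy with respect to ℙ_b. -/
open scoped BigOperators

section Helpers

variable {Ω α β 𝒴 : Type*} [Fintype Ω] [Fintype α] [Fintype β] [Fintype 𝒴]

/-- mass of the fiber of `f` over `a` -/
noncomputable def fiberMass [DecidableEq α] (p : Ω → ℝ) (f : Ω → α) (a : α) : ℝ :=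
  ∑ x, if f x = a then p x else 0

/-- conditional distribution of `p` given `f = a` -/
noncomputable def condp [DecidableEq α] (p : Ω → ℝ) (f : Ω → α) (a : α) : Ω → ℝ :=
  fun x => if f x = a then p x / fiberMass p f a else 0

lemma jointMapOut_nonneg [DecidableEq α] {p : Ω → ℝ} {W : Ω → 𝒴 → ℝ} {f : Ω → α}
    (hp : ∀ x, 0 ≤ p x) (hW : ∀ x y, 0 ≤ W x y) : ∀ z, 0 ≤ jointMapOut p W f z := by
  intro z
  refine Finset.sum_nonneg fun x _ => ?_
  split
  · exact mul_nonneg (hp x) (hW x _)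
  · exact le_refl 0

lemma jointMapOut_total [DecidableEq α] {p : Ω → ℝ} {W : Ω → 𝒴 → ℝ} (f : Ω → α)
    (hW : IsChannel W) :
    ∑ a, ∑ y, jointMapOut p W f (a, y) = ∑ x, p x := by
  unfold jointMapOut
  rw [Finset.sum_comm]
  have h1 : ∀ y : 𝒴, ∑ a : α, ∑ x, (if f x = a then p x * W x y else 0)
      = ∑ x, p x * W x y := by
    intro y
    rw [Finset.sum_comm]
    refine Finset.sum_congr rfl fun x _ => ?_
    simp
  simp only [h1]
  rw [Finset.sum_comm]
  refine Finset.sum_congr rfl fun x _ => ?_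
  rw [← Finset.mul_sum, (hW x).2, mul_one]

end Helpers
section Helpers2

variable {Ω α β 𝒴 : Type*} [Fintype Ω] [Fintype α] [Fintype β] [Fintype 𝒴]

lemma entropy_term_le_two {q : ℝ} (hq : 0 ≤ q) : q * Real.logb 2 q⁻¹ ≤ 2 := by
  rcases eq_or_lt_of_le hq with h | h
  · simp [← h]
  · have hlog2 : (0:ℝ) < Real.log 2 := Real.log_pos one_lt_two
    have h1 : Real.log q⁻¹ ≤ q⁻¹ - 1 := Real.log_le_sub_one_of_pos (by positivity)
    have step1 : q * Real.logb 2 q⁻¹ ≤ q * ((q⁻¹ - 1) / Real.log 2) := by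
      refine mul_le_mul_of_nonneg_left ?_ hq
      rw [Real.logb]
      gcongr
    refine step1.trans ?_
    have hq' : q * ((q⁻¹ - 1) / Real.log 2) = (1 - q) / Real.log 2 := by
      field_simp
    rw [hq']
    have := Real.log_two_gt_d9
    rw [div_le_iff₀ hlog2]
    nlinarith

/-- any nonnegative joint "distribution" has mutual information at most `2 * |𝒴|`. -/
lemma mutualInfo_le_two_card {j : α × 𝒴 → ℝ} (hj : ∀ z, 0 ≤ j z) :
    mutualInfo j ≤ 2 * Fintype.card 𝒴 := by
  unfold mutualInfo
  rw [Finset.sum_comm]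
  have key : ∀ y : 𝒴,
      (∑ a, j (a, y) * Real.logb 2 (j (a, y) / ((∑ b', j (a, b')) * (∑ a', j (a', y))))) ≤ 2 := by
    intro y
    set q : ℝ := ∑ a', j (a', y) with hqdef
    have hq0 : 0 ≤ q := Finset.sum_nonneg fun a _ => hj _
    have step : ∀ a : α, j (a, y) * Real.logb 2 (j (a, y) / ((∑ b', j (a, b')) * q))
        ≤ j (a, y) * Real.logb 2 q⁻¹ := by
      intro a
      rcases eq_or_lt_of_le (hj (a, y)) with h | h
      · rw [← h]; simp
      · have hrow : j (a, y) ≤ ∑ b', j (a, b') :=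
          Finset.single_le_sum (fun b _ => hj (a, b)) (Finset.mem_univ y)
        have hrowpos : 0 < ∑ b', j (a, b') := lt_of_lt_of_le h hrow
        have hqpos : 0 < q := lt_of_lt_of_le h
          (Finset.single_le_sum (fun a' _ => hj (a', y)) (Finset.mem_univ a))
        refine mul_le_mul_of_nonneg_left ?_ (hj (a, y))
        refine Real.logb_le_logb_of_le one_lt_two (by positivity) ?_
        rw [div_le_iff₀ (by positivity), inv_mul_eq_div, mul_div_assoc,
          div_self hqpos.ne', mul_one]
        exact hrow
    calc (∑ a, j (a, y) * Real.logb 2 (j (a, y) / ((∑ b', j (a, b')) * q)))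
        ≤ ∑ a, j (a, y) * Real.logb 2 q⁻¹ := Finset.sum_le_sum fun a _ => step a
      _ = q * Real.logb 2 q⁻¹ := by rw [← Finset.sum_mul]
      _ ≤ 2 := entropy_term_le_two hq0
  calc (∑ y : 𝒴, ∑ a, j (a, y) *
        Real.logb 2 (j (a, y) / ((∑ b', j (a, b')) * (∑ a', j (a', y)))))
      ≤ ∑ _y : 𝒴, (2:ℝ) := Finset.sum_le_sum fun y _ => key y
    _ = 2 * Fintype.card 𝒴 := by simp [mul_comm]

end Helpers2
section Helpers3

variable {Ω α β 𝒴 : Type*} [Fintype Ω] [Fintype α] [Fintype β] [Fintype 𝒴]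

lemma mutualInfo_trivial [DecidableEq α] [Subsingleton α] {p : Ω → ℝ} {W : Ω → 𝒴 → ℝ}
    (f : Ω → α) (hp : IsPMF p) (hW : IsChannel W) :
    mutualInfo (jointMapOut p W f) = 0 := by
  unfold mutualInfo
  refine Finset.sum_eq_zero fun a _ => Finset.sum_eq_zero fun y _ => ?_
  haveI : Unique α := uniqueOfSubsingleton a
  have hcol : (∑ a', jointMapOut p W f (a', y)) = jointMapOut p W f (a, y) := by
    rw [Fintype.sum_unique]
    exact congrArg (fun z => jointMapOut p W f (z, y)) (Subsingleton.elim _ _)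
  have hrow : (∑ b', jointMapOut p W f (a, b')) = 1 := by
    have := jointMapOut_total (p := p) (W := W) f hW
    rw [Fintype.sum_unique] at this
    have ha : (default : α) = a := Subsingleton.elim _ _
    rw [ha] at this
    rw [this, hp.2]
  rw [hcol, hrow, one_mul]
  rcases eq_or_ne (jointMapOut p W f (a, y)) 0 with h | h
  · rw [h]; simp
  · rw [div_self h]; simp

lemma mutualInfo_comp_inj [DecidableEq α] [DecidableEq β] (p : Ω → ℝ) (W : Ω → 𝒴 → ℝ)
    (f : Ω → α) {e : α → β} (he : Function.Injective e) :
    mutualInfo (jointMapOut p W (e ∘ f)) = mutualInfo (jointMapOut p W f) := by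
  have h1 : ∀ a y, jointMapOut p W (e ∘ f) (e a, y) = jointMapOut p W f (a, y) := by
    intro a y
    unfold jointMapOut
    refine Finset.sum_congr rfl fun x _ => ?_
    simp [Function.comp, he.eq_iff]
  have h0 : ∀ b y, (∀ a, e a ≠ b) → jointMapOut p W (e ∘ f) (b, y) = 0 := by
    intro b y hb
    refine Finset.sum_eq_zero fun x _ => ?_
    simp only [Function.comp]
    rw [if_neg (hb (f x))]
  have hcol : ∀ y, (∑ b, jointMapOut p W (e ∘ f) (b, y)) = ∑ a, jointMapOut p W f (a, y) := by
    intro y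
    rw [← Finset.sum_subset (Finset.subset_univ (Finset.univ.map ⟨e, he⟩))
      (fun b _ hb => h0 b y (by
        intro a hab
        exact hb (Finset.mem_map.mpr ⟨a, Finset.mem_univ a, hab⟩)))]
    rw [Finset.sum_map]
    exact Finset.sum_congr rfl fun a _ => h1 a y
  unfold mutualInfo
  rw [← Finset.sum_subset (Finset.subset_univ (Finset.univ.map ⟨e, he⟩))
    (fun b _ hb => ?_), Finset.sum_map]
  · refine Finset.sum_congr rfl fun a _ => Finset.sum_congr rfl fun y _ => ?_
    simp only [Function.Embedding.coeFn_mk]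
    have hrow : (∑ y' : 𝒴, jointMapOut p W (e ∘ f) (e a, y'))
        = ∑ y' : 𝒴, jointMapOut p W f (a, y') :=
      Finset.sum_congr rfl fun y' _ => h1 a y'
    rw [h1, hcol, hrow]
  · refine Finset.sum_eq_zero fun y _ => ?_
    rw [h0 b y (fun a hab => hb (Finset.mem_map.mpr ⟨a, Finset.mem_univ a, hab⟩))]
    simp

end Helpers3
section Chain
set_option linter.unusedSectionVars false

variable {Ω α β 𝒴 : Type*} [Fintype Ω] [Fintype α] [Fintype β] [Fintype 𝒴]
  [DecidableEq α] [DecidableEq β]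

lemma fiberMass_nonneg {p : Ω → ℝ} (hp : ∀ x, 0 ≤ p x) (f : Ω → α) (a : α) :
    0 ≤ fiberMass p f a := by
  refine Finset.sum_nonneg fun x _ => ?_
  split
  · exact hp x
  · exact le_refl 0

lemma condp_isPMF {p : Ω → ℝ} (hp : ∀ x, 0 ≤ p x) (f : Ω → α) {a : α}
    (ha : fiberMass p f a ≠ 0) : IsPMF (condp p f a) := by
  constructor
  · intro x
    unfold condp
    split
    · exact div_nonneg (hp x) (fiberMass_nonneg hp f a)
    · exact le_refl 0
  · unfold condp
    have : (∑ x, if f x = a then p x / fiberMass p f a else 0)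
        = (∑ x, if f x = a then p x else 0) / fiberMass p f a := by
      rw [Finset.sum_div]
      refine Finset.sum_congr rfl fun x _ => ?_
      split <;> simp
    rw [this]
    exact div_self ha

/-- the joint distribution of `(f X, g X, Y)`. -/
noncomputable def TT (p : Ω → ℝ) (W : Ω → 𝒴 → ℝ) (f : Ω → α) (g : Ω → β)
    (a : α) (c : β) (y : 𝒴) : ℝ :=
  ∑ x, if f x = a ∧ g x = c then p x * W x y else 0

lemma TT_nonneg {p : Ω → ℝ} {W : Ω → 𝒴 → ℝ} (hp : ∀ x, 0 ≤ p x)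
    (hW : ∀ x y, 0 ≤ W x y) (f : Ω → α) (g : Ω → β) (a : α) (c : β) (y : 𝒴) :
    0 ≤ TT p W f g a c y := by
  refine Finset.sum_nonneg fun x _ => ?_
  split
  · exact mul_nonneg (hp x) (hW x _)
  · exact le_refl 0

lemma jp_pair (p : Ω → ℝ) (W : Ω → 𝒴 → ℝ) (f : Ω → α) (g : Ω → β)
    (a : α) (c : β) (y : 𝒴) :
    jointMapOut p W (fun x => (f x, g x)) ((a, c), y) = TT p W f g a c y := by
  unfold jointMapOut TT
  refine Finset.sum_congr rfl fun x _ => ?_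
  simp [Prod.ext_iff]

lemma jp_f (p : Ω → ℝ) (W : Ω → 𝒴 → ℝ) (f : Ω → α) (g : Ω → β) (a : α) (y : 𝒴) :
    jointMapOut p W f (a, y) = ∑ c, TT p W f g a c y := by
  unfold jointMapOut TT
  rw [Finset.sum_comm]
  refine Finset.sum_congr rfl fun x _ => ?_
  by_cases h : f x = a <;> simp [h]

lemma jp_cond (p : Ω → ℝ) (W : Ω → 𝒴 → ℝ) (f : Ω → α) (g : Ω → β)
    (a : α) (c : β) (y : 𝒴) :
    jointMapOut (condp p f a) W g (c, y) = TT p W f g a c y / fiberMass p f a := by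
  unfold jointMapOut condp TT
  rw [Finset.sum_div]
  refine Finset.sum_congr rfl fun x _ => ?_
  by_cases h1 : g x = c <;> by_cases h2 : f x = a <;>
    simp [h1, h2, div_mul_eq_mul_div]

lemma fiberMass_eq_Pa {p : Ω → ℝ} {W : Ω → 𝒴 → ℝ} (hW : IsChannel W)
    (f : Ω → α) (g : Ω → β) (a : α) :
    fiberMass p f a = ∑ c, ∑ y, TT p W f g a c y := by
  unfold fiberMass TT
  have h1 : ∀ c : β, (∑ y : 𝒴, ∑ x, if f x = a ∧ g x = c then p x * W x y else 0)
      = ∑ x, if f x = a ∧ g x = c then p x else 0 := by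
    intro c
    rw [Finset.sum_comm]
    refine Finset.sum_congr rfl fun x _ => ?_
    by_cases h : f x = a ∧ g x = c
    · simp only [if_pos h]
      rw [← Finset.mul_sum, (hW x).2, mul_one]
    · simp [h]
  simp only [h1]
  rw [Finset.sum_comm]
  refine Finset.sum_congr rfl fun x _ => ?_
  by_cases h : f x = a <;> simp [h]

end Chain
section Chain2
set_option linter.unusedSectionVars false

variable {Ω α β 𝒴 : Type*} [Fintype Ω] [Fintype α] [Fintype β] [Fintype 𝒴]
  [DecidableEq α] [DecidableEq β]

lemma div_div_div_helper {t u v P : ℝ} (hP : P ≠ 0) :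
    (t / P) / ((u / P) * (v / P)) = t * P / (u * v) := by
  rcases eq_or_ne (u * v) 0 with h | h
  · rw [div_mul_div_comm, h, zero_div, div_zero, div_zero]
  · have hu : u ≠ 0 := fun hu => h (by rw [hu, zero_mul])
    have hv : v ≠ 0 := fun hv => h (by rw [hv, mul_zero])
    field_simp

/-- key pointwise identity -/
lemma key2 {p : Ω → ℝ} {W : Ω → 𝒴 → ℝ} (hp : ∀ x, 0 ≤ p x)
    (hW : ∀ x y, 0 ≤ W x y) (f : Ω → α) (g : Ω → β) (a : α) (c : β) (y : 𝒴) :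
    TT p W f g a c y * Real.logb 2 (TT p W f g a c y /
        ((∑ y', TT p W f g a c y') * (∑ a', ∑ c', TT p W f g a' c' y)))
      = TT p W f g a c y * Real.logb 2 ((∑ c', TT p W f g a c' y) /
          ((∑ y', ∑ c', TT p W f g a c' y') * (∑ a', ∑ c', TT p W f g a' c' y)))
        + TT p W f g a c y * Real.logb 2 (TT p W f g a c y *
            (∑ c', ∑ y', TT p W f g a c' y') /
            ((∑ y', TT p W f g a c y') * (∑ c', TT p W f g a c' y))) := by
  set T := TT p W f g with hT
  have hnn : ∀ a c y, 0 ≤ T a c y := TT_nonneg hp hW f g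
  rcases eq_or_lt_of_le (hnn a c y) with h | h
  · rw [← h]; simp
  · have hPac : 0 < ∑ y', T a c y' :=
      lt_of_lt_of_le h (Finset.single_le_sum (fun y' _ => hnn a c y') (Finset.mem_univ y))
    have hPay : 0 < ∑ c', T a c' y :=
      lt_of_lt_of_le h (Finset.single_le_sum (fun c' _ => hnn a c' y) (Finset.mem_univ c))
    have hPa : 0 < ∑ c', ∑ y', T a c' y' :=
      lt_of_lt_of_le hPac (Finset.single_le_sum
        (fun c' _ => Finset.sum_nonneg fun y' _ => hnn a c' y') (Finset.mem_univ c))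
    have hPa' : 0 < ∑ y', ∑ c', T a c' y' := by
      rw [Finset.sum_comm]; exact hPa
    have hQy : 0 < ∑ a', ∑ c', T a' c' y :=
      lt_of_lt_of_le hPay (Finset.single_le_sum
        (fun a' _ => Finset.sum_nonneg fun c' _ => hnn a' c' y) (Finset.mem_univ a))
    rw [Real.logb_div h.ne' (mul_ne_zero hPac.ne' hQy.ne'),
      Real.logb_mul hPac.ne' hQy.ne',
      Real.logb_div hPay.ne' (mul_ne_zero hPa'.ne' hQy.ne'),
      Real.logb_mul hPa'.ne' hQy.ne',
      Real.logb_div (mul_ne_zero h.ne' hPa.ne') (mul_ne_zero hPac.ne' hPay.ne'),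
      Real.logb_mul h.ne' hPa.ne', Real.logb_mul hPac.ne' hPay.ne']
    have hswap : (∑ y', ∑ c', T a c' y') = ∑ c', ∑ y', T a c' y' := Finset.sum_comm
    rw [hswap]
    ring

end Chain2
section Chain3
set_option linter.unusedSectionVars false

variable {Ω α β 𝒴 : Type*} [Fintype Ω] [Fintype α] [Fintype β] [Fintype 𝒴]
  [DecidableEq α] [DecidableEq β]

lemma Hpair (p : Ω → ℝ) (W : Ω → 𝒴 → ℝ) (f : Ω → α) (g : Ω → β) :
    mutualInfo (jointMapOut p W (fun x => (f x, g x)))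
      = ∑ a, ∑ c, ∑ y, TT p W f g a c y * Real.logb 2 (TT p W f g a c y /
          ((∑ y', TT p W f g a c y') * (∑ a', ∑ c', TT p W f g a' c' y))) := by
  unfold mutualInfo
  rw [Fintype.sum_prod_type]
  simp only [Fintype.sum_prod_type, jp_pair]

lemma Hf (p : Ω → ℝ) (W : Ω → 𝒴 → ℝ) (f : Ω → α) (g : Ω → β) :
    mutualInfo (jointMapOut p W f)
      = ∑ a, ∑ y, (∑ c, TT p W f g a c y) * Real.logb 2 ((∑ c', TT p W f g a c' y) /
          ((∑ y', ∑ c', TT p W f g a c' y') * (∑ a', ∑ c', TT p W f g a' c' y))) := by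
  unfold mutualInfo
  simp only [jp_f (g := g)]

lemma Hcond (p : Ω → ℝ) (W : Ω → 𝒴 → ℝ) (f : Ω → α) (g : Ω → β) (a : α) :
    mutualInfo (jointMapOut (condp p f a) W g)
      = ∑ c, ∑ y, (TT p W f g a c y / fiberMass p f a) * Real.logb 2
          ((TT p W f g a c y / fiberMass p f a) /
            (((∑ y', TT p W f g a c y') / fiberMass p f a) *
             ((∑ c', TT p W f g a c' y) / fiberMass p f a))) := by
  unfold mutualInfo
  simp only [jp_cond, ← Finset.sum_div]

lemma key1 {p : Ω → ℝ} {W : Ω → 𝒴 → ℝ} (hp : ∀ x, 0 ≤ p x) (hW : IsChannel W)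
    (f : Ω → α) (g : Ω → β) (a : α) :
    fiberMass p f a * mutualInfo (jointMapOut (condp p f a) W g)
      = ∑ c, ∑ y, TT p W f g a c y * Real.logb 2 (TT p W f g a c y *
          (∑ c', ∑ y', TT p W f g a c' y') /
          ((∑ y', TT p W f g a c y') * (∑ c', TT p W f g a c' y))) := by
  have hWnn : ∀ x y, 0 ≤ W x y := fun x y => (hW x).1 y
  rcases eq_or_ne (fiberMass p f a) 0 with hF | hF
  · have hT0 : ∀ c y, TT p W f g a c y = 0 := by
      have := (fiberMass_eq_Pa (p := p) hW f g a).symm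
      rw [hF] at this
      intro c y
      have h1 : ∀ c' ∈ Finset.univ, (0:ℝ) ≤ ∑ y', TT p W f g a c' y' :=
        fun c' _ => Finset.sum_nonneg fun y' _ => TT_nonneg hp hWnn f g a c' y'
      have h2 := (Finset.sum_eq_zero_iff_of_nonneg h1).mp this c (Finset.mem_univ c)
      have h3 : ∀ y' ∈ Finset.univ, (0:ℝ) ≤ TT p W f g a c y' :=
        fun y' _ => TT_nonneg hp hWnn f g a c y'
      exact (Finset.sum_eq_zero_iff_of_nonneg h3).mp h2 y (Finset.mem_univ y)
    rw [hF, zero_mul]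
    symm
    refine Finset.sum_eq_zero fun c _ => Finset.sum_eq_zero fun y _ => ?_
    rw [hT0 c y, zero_mul]
  · rw [Hcond, Finset.mul_sum]
    rw [← fiberMass_eq_Pa (p := p) hW f g a]
    refine Finset.sum_congr rfl fun c _ => ?_
    rw [Finset.mul_sum]
    refine Finset.sum_congr rfl fun y _ => ?_
    rw [div_div_div_helper hF, ← mul_assoc, mul_comm (fiberMass p f a),
      div_mul_cancel₀ _ hF]

lemma chain_rule {p : Ω → ℝ} {W : Ω → 𝒴 → ℝ} (hp : ∀ x, 0 ≤ p x) (hW : IsChannel W)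
    (f : Ω → α) (g : Ω → β) :
    mutualInfo (jointMapOut p W (fun x => (f x, g x)))
      = mutualInfo (jointMapOut p W f)
        + ∑ a, fiberMass p f a * mutualInfo (jointMapOut (condp p f a) W g) := by
  have hWnn : ∀ x y, 0 ≤ W x y := fun x y => (hW x).1 y
  rw [Hpair, Hf (g := g)]
  have step1 : ∀ a : α, (∑ c, ∑ y, TT p W f g a c y * Real.logb 2 (TT p W f g a c y /
        ((∑ y', TT p W f g a c y') * (∑ a', ∑ c', TT p W f g a' c' y))))
      = (∑ c, ∑ y, TT p W f g a c y * Real.logb 2 ((∑ c', TT p W f g a c' y) /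
          ((∑ y', ∑ c', TT p W f g a c' y') * (∑ a', ∑ c', TT p W f g a' c' y))))
        + ∑ c, ∑ y, TT p W f g a c y * Real.logb 2 (TT p W f g a c y *
            (∑ c', ∑ y', TT p W f g a c' y') /
            ((∑ y', TT p W f g a c y') * (∑ c', TT p W f g a c' y))) := by
    intro a
    rw [← Finset.sum_add_distrib]
    refine Finset.sum_congr rfl fun c _ => ?_
    rw [← Finset.sum_add_distrib]
    exact Finset.sum_congr rfl fun y _ => key2 hp hWnn f g a c y
  simp only [step1]
  rw [Finset.sum_add_distrib]
  congr 1
  · refine Finset.sum_congr rfl fun a _ => ?_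
    rw [Finset.sum_comm]
    refine Finset.sum_congr rfl fun y _ => ?_
    rw [← Finset.sum_mul]
  · exact Finset.sum_congr rfl fun a _ => (key1 hp hW f g a).symm

end Chain3
section Main

lemma sum_fiberMass {Ω α : Type*} [Fintype Ω] [Fintype α] [DecidableEq α]
    (p : Ω → ℝ) (f : Ω → α) : ∑ a, fiberMass p f a = ∑ x, p x := by
  unfold fiberMass
  rw [Finset.sum_comm]
  refine Finset.sum_congr rfl fun x _ => ?_
  simp

variable {n : ℕ} {𝒳 : Fin n → Type*} [∀ i, Fintype (𝒳 i)] [∀ i, DecidableEq (𝒳 i)]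
  {𝒴 : Type*} [Fintype 𝒴]

lemma restr_bound (W : (∀ i, 𝒳 i) → 𝒴 → ℝ) (hW : IsChannel W)
    (S : Finset (Fin n)) :
    ∀ p : (∀ i, 𝒳 i) → ℝ, IsPMF p →
      mutualInfo (jointMapOut p W (restr S))
        ≤ S.card * indCap W (allPMF (∀ i, 𝒳 i)) := by
  classical
  induction S using Finset.induction_on with
  | empty =>
      intro p hp
      haveI : IsEmpty {j // j ∈ (∅ : Finset (Fin n))} :=
        ⟨fun j => Finset.notMem_empty j.1 j.2⟩
      haveI : Subsingleton (∀ j : {j // j ∈ (∅ : Finset (Fin n))}, 𝒳 j.1) :=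
        ⟨fun u v => funext fun j => (IsEmpty.false j).elim⟩
      rw [mutualInfo_trivial (restr ∅) hp hW]
      simp
  | @insert i S' hiS' ih =>
      intro p hp
      set C := indCap W (allPMF (∀ i, 𝒳 i)) with hCdef
      have hWnn : ∀ x y, 0 ≤ W x y := fun x y => (hW x).1 y
      have hbdd : BddAbove {r | ∃ q ∈ allPMF (∀ i, 𝒳 i), ∃ i0 : Fin n,
          r = mutualInfo (jointMapOut q W (fun x => x i0))} := by
        refine ⟨2 * Fintype.card 𝒴, fun r hr => ?_⟩
        obtain ⟨q, hq, i0, rfl⟩ := hr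
        exact mutualInfo_le_two_card (jointMapOut_nonneg hq.1 hWnn)
      let e : (∀ j : {j // j ∈ insert i S'}, 𝒳 j.1) →
          ((∀ j : {j // j ∈ S'}, 𝒳 j.1) × 𝒳 i) :=
        fun u => (fun j => u ⟨j.1, Finset.mem_insert_of_mem j.2⟩,
          u ⟨i, Finset.mem_insert_self i S'⟩)
      have he : Function.Injective e := by
        intro u v h
        funext j
        obtain ⟨j, hj⟩ := j
        rcases Finset.mem_insert.mp hj with rfl | hj'
        · exact congrArg Prod.snd h
        · exact congrFun (congrArg Prod.fst h) ⟨j, hj'⟩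
      have h1 : mutualInfo (jointMapOut p W (fun x => (restr S' x, x i)))
          = mutualInfo (jointMapOut p W (restr (insert i S'))) := by
        have hcomp : (fun x : ∀ i, 𝒳 i => (restr S' x, x i))
            = e ∘ restr (insert i S') := rfl
        rw [hcomp]
        exact mutualInfo_comp_inj p W (restr (insert i S')) he
      rw [← h1, chain_rule hp.1 hW (restr S') (fun x => x i)]
      have hC : ∀ a, fiberMass p (restr S') a ≠ 0 →
          mutualInfo (jointMapOut (condp p (restr S') a) W (fun x => x i)) ≤ C := by
        intro a ha
        refine le_csSup hbdd ?_
        exact ⟨condp p (restr S') a, condp_isPMF hp.1 _ ha, i, rfl⟩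
      have hsum : (∑ a, fiberMass p (restr S') a *
          mutualInfo (jointMapOut (condp p (restr S') a) W (fun x => x i))) ≤ C := by
        calc (∑ a, fiberMass p (restr S') a *
              mutualInfo (jointMapOut (condp p (restr S') a) W (fun x => x i)))
            ≤ ∑ a, fiberMass p (restr S') a * C := by
              refine Finset.sum_le_sum fun a _ => ?_
              rcases eq_or_ne (fiberMass p (restr S') a) 0 with h0 | h0
              · rw [h0, zero_mul, zero_mul]
              · exact mul_le_mul_of_nonneg_left (hC a h0)
                  (fiberMass_nonneg hp.1 _ a)
          _ = (∑ a, fiberMass p (restr S') a) * C := (Finset.sum_mul _ _ _).symm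
          _ = 1 * C := by rw [sum_fiberMass, hp.2]
          _ = C := one_mul C
      have hih := ih p hp
      have hcard : ((insert i S').card : ℝ) = (S'.card : ℝ) + 1 := by
        rw [Finset.card_insert_of_notMem hiS']
        push_cast
        ring
      rw [hcard]
      have : ((S'.card : ℝ) + 1) * C = (S'.card : ℝ) * C + C := by ring
      rw [this]
      exact add_le_add hih hsum

end Main
/-- Theorem 2: if the channel is `(b,δ)`-balanced, i.e.
`C₁(ℙ) = C₁(ℙ_b) + δ`, and satisfies `ε`-information privacy w.r.t. `ℙ_b`, then for
every `k ∈ [n]` the `k`-group capacity w.r.t. `ℙ_b` satisfies `C_k(ℙ_b) ≤ k(ε + δ)`: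
the channel satisfies `δ`-group privacy with respect to `ℙ_b`. -/
theorem group_privacy_balanced
    {n : ℕ} {𝒳 : Fin n → Type*} [∀ i, Fintype (𝒳 i)] [∀ i, DecidableEq (𝒳 i)]
    [∀ i, Nonempty (𝒳 i)] {𝒴 : Type*} [Fintype 𝒴] [Nonempty 𝒴]
    (W : (∀ i, 𝒳 i) → 𝒴 → ℝ) (hW : IsChannel W)
    (b δ ε : ℝ) (hb : 0 ≤ b) (hδ : 0 ≤ δ) (hε : 0 ≤ ε)
    (hbal : indCap W (allPMF (∀ i, 𝒳 i)) = indCap W (PMFb (∀ i, 𝒳 i) b) + δ)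
    (hip : indCap W (PMFb (∀ i, 𝒳 i) b) ≤ ε) :
    ∀ k : ℕ, 1 ≤ k → k ≤ n →
      groupCap W (PMFb (∀ i, 𝒳 i) b) k ≤ k * (ε + δ) := by
  intro k hk1 hkn
  have hεδ : (0:ℝ) ≤ (k : ℝ) * (ε + δ) := by positivity
  refine Real.sSup_le ?_ hεδ
  rintro r ⟨p, hp, S, hScard, rfl⟩
  have h1 := restr_bound W hW S p hp.1
  have hC : indCap W (allPMF (∀ i, 𝒳 i)) ≤ ε + δ := by
    rw [hbal]; linarith
  calc mutualInfo (jointMapOut p W (restr S))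
      ≤ (S.card : ℝ) * indCap W (allPMF (∀ i, 𝒳 i)) := h1
    _ = (k : ℝ) * indCap W (allPMF (∀ i, 𝒳 i)) := by rw [hScard]
    _ ≤ (k : ℝ) * (ε + δ) := mul_le_mul_of_nonneg_left hC (by positivity)
end

section
/- Let 𝒳 = ∏_{i=1}^n 𝒳_i and let p(y_j|x), j ∈ [m], be m privacy channels on 𝒳, where channel j satisfies ε_j-information privacy with respect to ℙ, i.e. sup_{X∈ℙ, i∈[n]} I(X_i;Y_j) ≤ ε_j. Then the composed channel p(y|x) = ∏_{j∈[m]} p(y_j|x) with output Y = (Y_1,…,Y_m) satisfies: for every input distribution X ∈ ℙ and every i ∈ [n], I(X_i; Y) ≤ Σ_{j∈[m]} ε_j; i.e. the individual channel capacity of the composed channel with respect to ℙ is at most Σ_{j∈[m]} ε_j. -/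
open scoped BigOperators

section BasicCompositionAux

lemma sum_ite_const' {β : Type*} [Fintype β] (P : Prop) [Decidable P] (g : β → ℝ) :
    ∑ b, (if P then g b else 0) = if P then ∑ b, g b else 0 := by
  split <;> simp

lemma mutualInfo_equiv {α β β' : Type*} [Fintype α] [Fintype β] [Fintype β']
    (e : β ≃ β') (j : α × β' → ℝ) :
    mutualInfo (fun z : α × β => j (z.1, e z.2)) = mutualInfo j := by
  unfold mutualInfo
  refine Finset.sum_congr rfl fun a _ => ?_
  rw [← Equiv.sum_comp e (fun b' => j (a, b') * Real.logb 2 (j (a, b') /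
      ((∑ b'', j (a, b'')) * (∑ a', j (a', b')))))]
  refine Finset.sum_congr rfl fun b _ => ?_
  simp only
  rw [Equiv.sum_comp e (fun b'' => j (a, b''))]

lemma step_compose {Ω γ A B : Type*} [Fintype Ω] [Nonempty Ω] [Fintype γ] [DecidableEq γ]
    [Fintype A] [Fintype B]
    (p : Ω → ℝ) (hp : IsPMF p) (U : Ω → A → ℝ) (hU : IsChannel U)
    (V : Ω → B → ℝ) (hV : IsChannel V) (f : Ω → γ) (ε2 : ℝ)
    (hε2 : ∀ q, IsPMF q → mutualInfo (jointMapOut q V f) ≤ ε2) :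
    mutualInfo (jointMapOut p (fun x (ab : A × B) => U x ab.1 * V x ab.2) f)
      ≤ mutualInfo (jointMapOut p U f) + ε2 := by
  obtain ⟨hp0, hp1⟩ := hp
  have hU0 : ∀ x a, 0 ≤ U x a := fun x a => (hU x).1 a
  have hU1 : ∀ x, ∑ a, U x a = 1 := fun x => (hU x).2
  have hV0 : ∀ x b, 0 ≤ V x b := fun x b => (hV x).1 b
  have hV1 : ∀ x, ∑ b, V x b = 1 := fun x => (hV x).2
  -- named quantities
  set UV : Ω → A × B → ℝ := fun x ab => U x ab.1 * V x ab.2 with hUVdef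
  set J : γ → A → B → ℝ := fun c a b => jointMapOut p UV f (c, (a, b)) with hJdef
  set JA : γ → A → ℝ := fun c a => jointMapOut p U f (c, a) with hJAdef
  set rA : A → ℝ := fun a => ∑ x, p x * U x a with hrAdef
  set pC : γ → ℝ := fun c => ∑ x, if f x = c then p x else 0 with hpCdef
  set rAB : A → B → ℝ := fun a b => ∑ x, p x * (U x a * V x b) with hrABdef
  set post : A → Ω → ℝ :=
    fun a x => if rA a = 0 then ((Fintype.card Ω : ℝ))⁻¹ else p x * U x a / rA a with hpostdef
  set K : A → γ → B → ℝ := fun a c b => jointMapOut (post a) V f (c, b) with hKdef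
  set qC : A → γ → ℝ := fun a c => ∑ b, K a c b with hqCdef
  set kB : A → B → ℝ := fun a b => ∑ c, K a c b with hkBdef
  -- basic nonnegativity
  have hJ0 : ∀ c a b, 0 ≤ J c a b := by
    intro c a b
    refine Finset.sum_nonneg fun x _ => ?_
    split
    · exact mul_nonneg (hp0 x) (mul_nonneg (hU0 x a) (hV0 x b))
    · exact le_rfl
  have hJA0 : ∀ c a, 0 ≤ JA c a := by
    intro c a
    refine Finset.sum_nonneg fun x _ => ?_
    split
    · exact mul_nonneg (hp0 x) (hU0 x a)
    · exact le_rfl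
  have hrA0 : ∀ a, 0 ≤ rA a :=
    fun a => Finset.sum_nonneg fun x _ => mul_nonneg (hp0 x) (hU0 x a)
  -- sum identities
  have sumb_J : ∀ c a, ∑ b, J c a b = JA c a := by
    intro c a
    simp only [hJdef, hJAdef, jointMapOut]
    rw [Finset.sum_comm]
    refine Finset.sum_congr rfl fun x _ => ?_
    rw [sum_ite_const']
    congr 1
    rw [← Finset.mul_sum]
    rw [show (∑ b, U x a * V x b) = U x a * ∑ b, V x b from by rw [Finset.mul_sum],
      hV1 x, mul_one]
  have suma_JA : ∀ c, ∑ a, JA c a = pC c := by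
    intro c
    simp only [hJAdef, hpCdef, jointMapOut]
    rw [Finset.sum_comm]
    refine Finset.sum_congr rfl fun x _ => ?_
    rw [sum_ite_const']
    congr 1
    rw [← Finset.mul_sum, hU1 x, mul_one]
  have sumc_J : ∀ a b, ∑ c, J c a b = rAB a b := by
    intro a b
    simp only [hJdef, hrABdef, jointMapOut]
    rw [Finset.sum_comm]
    refine Finset.sum_congr rfl fun x _ => ?_
    rw [Finset.sum_ite_eq Finset.univ (f x) (fun _ => p x * (U x a * V x b))]
    simp
  have sumc_JA : ∀ a, ∑ c, JA c a = rA a := by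
    intro a
    simp only [hJAdef, hrAdef, jointMapOut]
    rw [Finset.sum_comm]
    refine Finset.sum_congr rfl fun x _ => ?_
    rw [Finset.sum_ite_eq Finset.univ (f x) (fun _ => p x * U x a)]
    simp
  have sumab_J : ∀ c, ∑ ab : A × B, jointMapOut p UV f (c, ab) = pC c := by
    intro c
    rw [Fintype.sum_prod_type]
    rw [show (∑ a, ∑ b, jointMapOut p UV f (c, (a, b))) = ∑ a, JA c a from
      Finset.sum_congr rfl fun a _ => sumb_J c a]
    exact suma_JA c
  -- zero case
  have hrA_zero : ∀ a, rA a = 0 → ∀ x, p x * U x a = 0 := by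
    intro a ha x
    have := (Finset.sum_eq_zero_iff_of_nonneg
      (fun x _ => mul_nonneg (hp0 x) (hU0 x a))).1 ha
    exact this x (Finset.mem_univ x)
  have hJzero : ∀ a, rA a = 0 → ∀ c b, J c a b = 0 := by
    intro a ha c b
    refine Finset.sum_eq_zero fun x _ => ?_
    split
    · have := hrA_zero a ha x
      simp only [UV]
      rw [← mul_assoc, this, zero_mul]
    · rfl
  -- posterior is a PMF
  have hpost : ∀ a, IsPMF (post a) := by
    intro a
    by_cases ha : rA a = 0
    · constructor
      · intro x; simp only [hpostdef, ha, if_pos]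
        positivity
      · simp only [hpostdef, ha, if_pos]
        rw [Finset.sum_const, nsmul_eq_mul, Finset.card_univ,
          mul_inv_cancel₀ (Nat.cast_ne_zero.2 Fintype.card_ne_zero)]
    · have har; exact lt_of_le_of_ne (hrA0 a) (Ne.symm ha)
      constructor
      · intro x; simp only [hpostdef, ha, if_neg, if_false]
        exact div_nonneg (mul_nonneg (hp0 x) (hU0 x a)) (hrA0 a)
      · simp only [hpostdef, ha, if_false]
        rw [← Finset.sum_div, div_eq_one_iff_eq ha]
  -- key factorizations
  have hJK : ∀ a c b, J c a b = rA a * K a c b := by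
    intro a c b
    by_cases ha : rA a = 0
    · rw [hJzero a ha c b, ha, zero_mul]
    · simp only [hJdef, hKdef, jointMapOut, Finset.mul_sum]
      refine Finset.sum_congr rfl fun x _ => ?_
      split
      · simp only [hpostdef, ha, if_false, UV]
        field_simp
      · rw [mul_zero]
  have hJAK : ∀ a c, JA c a = rA a * qC a c := by
    intro a c
    rw [hqCdef]
    simp only
    rw [Finset.mul_sum, ← sumb_J c a]
    exact Finset.sum_congr rfl fun b _ => hJK a c b
  have hABK : ∀ a b, rAB a b = rA a * kB a b := by
    intro a b
    rw [hkBdef]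
    simp only
    rw [Finset.mul_sum, ← sumc_J a b]
    exact Finset.sum_congr rfl fun c _ => hJK a c b
  have sum_rA : ∑ a, rA a = 1 := by
    simp only [hrAdef]
    rw [Finset.sum_comm]
    calc ∑ x, ∑ a, p x * U x a = ∑ x, p x := by
          refine Finset.sum_congr rfl fun x _ => ?_
          rw [← Finset.mul_sum, hU1 x, mul_one]
      _ = 1 := hp1
  -- expansions of mutual informations
  have expand1 : mutualInfo (jointMapOut p UV f)
      = ∑ c, ∑ a, ∑ b, J c a b * Real.logb 2 (J c a b / (pC c * rAB a b)) := by
    unfold mutualInfo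
    refine Finset.sum_congr rfl fun c _ => ?_
    rw [Fintype.sum_prod_type]
    refine Finset.sum_congr rfl fun a _ => Finset.sum_congr rfl fun b _ => ?_
    rw [sumab_J c, sumc_J a b]
  have expand2 : mutualInfo (jointMapOut p U f)
      = ∑ c, ∑ a, JA c a * Real.logb 2 (JA c a / (pC c * rA a)) := by
    unfold mutualInfo
    refine Finset.sum_congr rfl fun c _ => Finset.sum_congr rfl fun a _ => ?_
    rw [suma_JA c, sumc_JA a]
  have expand3 : ∀ a, mutualInfo (jointMapOut (post a) V f)
      = ∑ c, ∑ b, K a c b * Real.logb 2 (K a c b / (qC a c * kB a b)) := fun a => rfl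
  -- pointwise split of the logarithm
  have split : ∀ c a b, J c a b * Real.logb 2 (J c a b / (pC c * rAB a b))
      = J c a b * Real.logb 2 (JA c a / (pC c * rA a))
        + J c a b * Real.logb 2 (K a c b / (qC a c * kB a b)) := by
    intro c a b
    by_cases h0 : J c a b = 0
    · rw [h0]; ring
    · have hJpos : 0 < J c a b := lt_of_le_of_ne (hJ0 c a b) (Ne.symm h0)
      have hJAge : J c a b ≤ JA c a := by
        rw [← sumb_J c a]
        exact Finset.single_le_sum (fun b' _ => hJ0 c a b') (Finset.mem_univ b)
      have hJApos : 0 < JA c a := lt_of_lt_of_le hJpos hJAge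
      have hpCpos : 0 < pC c := by
        rw [← suma_JA c]
        exact lt_of_lt_of_le hJApos
          (Finset.single_le_sum (fun a' _ => hJA0 c a') (Finset.mem_univ a))
      have hrApos : 0 < rA a := by
        rw [← sumc_JA a]
        exact lt_of_lt_of_le hJApos
          (Finset.single_le_sum (fun c' _ => hJA0 c' a) (Finset.mem_univ c))
      have hABpos : 0 < rAB a b := by
        rw [← sumc_J a b]
        exact lt_of_lt_of_le hJpos
          (Finset.single_le_sum (fun c' _ => hJ0 c' a b) (Finset.mem_univ c))
      have hrAne : rA a ≠ 0 := ne_of_gt hrApos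
      have hKpos : 0 < K a c b := by
        have := hJK a c b
        nlinarith [hJpos, hrApos]
      have hqCpos : 0 < qC a c := by
        have := hJAK a c
        nlinarith [hJApos, hrApos]
      have hkBpos : 0 < kB a b := by
        have := hABK a b
        nlinarith [hABpos, hrApos]
      rw [← mul_add, ← Real.logb_mul
        (ne_of_gt (div_pos hJApos (mul_pos hpCpos hrApos)))
        (ne_of_gt (div_pos hKpos (mul_pos hqCpos hkBpos)))]
      congr 1
      have hK' : K a c b = J c a b / rA a := by
        rw [hJK a c b]; field_simp
      have hqC' : qC a c = JA c a / rA a := by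
        rw [hJAK a c]; field_simp
      have hkB' : kB a b = rAB a b / rA a := by
        rw [hABK a b]; field_simp
      have hpCne : pC c ≠ 0 := ne_of_gt hpCpos
      have hABne : rAB a b ≠ 0 := ne_of_gt hABpos
      have hJAne : JA c a ≠ 0 := ne_of_gt hJApos
      rw [hK', hqC', hkB']
      congr 1
      field_simp
  -- put things together
  rw [expand1, expand2]
  have main : (∑ c, ∑ a, ∑ b, J c a b * Real.logb 2 (J c a b / (pC c * rAB a b)))
      = (∑ c, ∑ a, JA c a * Real.logb 2 (JA c a / (pC c * rA a)))
        + ∑ a, rA a * mutualInfo (jointMapOut (post a) V f) := by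
    calc (∑ c, ∑ a, ∑ b, J c a b * Real.logb 2 (J c a b / (pC c * rAB a b)))
        = ∑ c, ∑ a, ∑ b, (J c a b * Real.logb 2 (JA c a / (pC c * rA a))
            + J c a b * Real.logb 2 (K a c b / (qC a c * kB a b))) := by
          refine Finset.sum_congr rfl fun c _ => Finset.sum_congr rfl fun a _ =>
            Finset.sum_congr rfl fun b _ => split c a b
      _ = (∑ c, ∑ a, ∑ b, J c a b * Real.logb 2 (JA c a / (pC c * rA a)))
          + ∑ c, ∑ a, ∑ b, J c a b * Real.logb 2 (K a c b / (qC a c * kB a b)) := by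
          rw [← Finset.sum_add_distrib]
          refine Finset.sum_congr rfl fun c _ => ?_
          rw [← Finset.sum_add_distrib]
          refine Finset.sum_congr rfl fun a _ => ?_
          rw [← Finset.sum_add_distrib]
      _ = (∑ c, ∑ a, JA c a * Real.logb 2 (JA c a / (pC c * rA a)))
          + ∑ a, rA a * mutualInfo (jointMapOut (post a) V f) := by
          congr 1
          · refine Finset.sum_congr rfl fun c _ => Finset.sum_congr rfl fun a _ => ?_
            rw [← Finset.sum_mul, sumb_J c a]
          · rw [Finset.sum_comm]
            refine Finset.sum_congr rfl fun a _ => ?_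
            rw [expand3 a, Finset.mul_sum]
            refine Finset.sum_congr rfl fun c _ => ?_
            rw [Finset.mul_sum]
            refine Finset.sum_congr rfl fun b _ => ?_
            rw [hJK a c b, mul_assoc]
  rw [main]
  have : (∑ a, rA a * mutualInfo (jointMapOut (post a) V f)) ≤ ε2 := by
    calc (∑ a, rA a * mutualInfo (jointMapOut (post a) V f)) ≤ ∑ a, rA a * ε2 :=
          Finset.sum_le_sum fun a _ =>
            mul_le_mul_of_nonneg_left (hε2 (post a) (hpost a)) (hrA0 a)
      _ = ε2 := by rw [← Finset.sum_mul, sum_rA, one_mul]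
  linarith

universe uY

lemma compose_bound {Ω γ : Type*} [Fintype Ω] [Nonempty Ω] [Fintype γ] [DecidableEq γ]
    (f : Ω → γ) :
    ∀ (m : ℕ) (𝒴 : Fin m → Type uY) (_inst : ∀ j, Fintype (𝒴 j))
      (W : ∀ j, Ω → 𝒴 j → ℝ), (∀ j, IsChannel (W j)) →
      ∀ (ε : Fin m → ℝ),
      (∀ j, ∀ q, IsPMF q → mutualInfo (jointMapOut q (W j) f) ≤ ε j) →
      ∀ p, IsPMF p →
        mutualInfo (jointMapOut p (fun x (y : ∀ j, 𝒴 j) => ∏ j, W j x (y j)) f)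
          ≤ ∑ j, ε j := by
  intro m
  induction m with
  | zero =>
    intro 𝒴 inst W hW ε hip p hp
    rw [show (∑ j : Fin 0, ε j) = 0 by simp]
    have hW0 : ∀ x (y : ∀ j : Fin 0, 𝒴 j), (∏ j, W j x (y j)) = 1 := by
      intro x y; simp
    have hzero : mutualInfo (jointMapOut p (fun x (y : ∀ j : Fin 0, 𝒴 j) =>
        ∏ j, W j x (y j)) f) = 0 := by
      unfold mutualInfo
      refine Finset.sum_eq_zero fun c _ => Finset.sum_eq_zero fun y _ => ?_
      have hcol : (∑ c', jointMapOut p (fun x (y : ∀ j : Fin 0, 𝒴 j) =>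
          ∏ j, W j x (y j)) f (c', y)) = 1 := by
        simp only [jointMapOut]
        rw [Finset.sum_comm]
        calc (∑ x, ∑ c' : γ, if f x = c' then p x * ∏ j, W j x (y j) else 0)
            = ∑ x, p x := by
              refine Finset.sum_congr rfl fun x _ => ?_
              rw [Finset.sum_ite_eq Finset.univ (f x) (fun _ => p x * ∏ j, W j x (y j))]
              simp
          _ = 1 := hp.2
      haveI : Unique (∀ j : Fin 0, 𝒴 j) := Pi.uniqueOfIsEmpty _
      have hrow : (∑ y', jointMapOut p (fun x (y : ∀ j : Fin 0, 𝒴 j) =>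
          ∏ j, W j x (y j)) f (c, y'))
          = jointMapOut p (fun x (y : ∀ j : Fin 0, 𝒴 j) => ∏ j, W j x (y j)) f (c, y) := by
        rw [Fintype.sum_unique]
        congr 1
        exact congrArg _ (Subsingleton.elim _ _)
      rw [hcol, hrow, mul_one]
      by_cases ht : jointMapOut p (fun x (y : ∀ j : Fin 0, 𝒴 j) =>
          ∏ j, W j x (y j)) f (c, y) = 0
      · rw [ht, zero_mul]
      · rw [div_self ht, Real.logb_one, mul_zero]
    rw [hzero]
  | succ m ih =>
    intro 𝒴 inst W hW ε hip p hp
    set U : Ω → 𝒴 0 → ℝ := W 0 with hUdef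
    set Vt : Ω → (∀ j : Fin m, 𝒴 j.succ) → ℝ := fun x t => ∏ j, W j.succ x (t j) with hVtdef
    have hVt : IsChannel Vt := by
      intro x
      constructor
      · intro t
        exact Finset.prod_nonneg fun j _ => (hW j.succ x).1 (t j)
      · calc (∑ t : ∀ j : Fin m, 𝒴 j.succ, ∏ j, W j.succ x (t j))
            = ∏ j : Fin m, ∑ y, W j.succ x y := (Fintype.prod_sum _).symm
          _ = 1 := by
              rw [Finset.prod_congr rfl fun j _ => (hW j.succ x).2, Finset.prod_const_one]
    have hεt : ∀ q, IsPMF q → mutualInfo (jointMapOut q Vt f) ≤ ∑ j : Fin m, ε j.succ :=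
      fun q hq => ih (fun j => 𝒴 j.succ) (fun j => inst j.succ) (fun j => W j.succ)
        (fun j => hW j.succ) (fun j => ε j.succ) (fun j => hip j.succ) q hq
    have hMIeq : mutualInfo (jointMapOut p (fun x (y : ∀ j, 𝒴 j) => ∏ j, W j x (y j)) f)
        = mutualInfo (jointMapOut p
            (fun x (ab : 𝒴 0 × ∀ j : Fin m, 𝒴 j.succ) => U x ab.1 * Vt x ab.2) f) := by
      rw [← mutualInfo_equiv (Fin.consEquiv 𝒴)
        (jointMapOut p (fun x (y : ∀ j, 𝒴 j) => ∏ j, W j x (y j)) f)]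
      congr 1
      funext z
      obtain ⟨c, a, t⟩ := z
      simp only [jointMapOut, Fin.consEquiv_apply]
      refine Finset.sum_congr rfl fun x _ => ?_
      congr 1
      rw [Fin.prod_univ_succ]
      simp only [Fin.cons_zero, Fin.cons_succ, hUdef, hVtdef]
    rw [hMIeq, Fin.sum_univ_succ]
    calc mutualInfo (jointMapOut p
          (fun x (ab : 𝒴 0 × ∀ j : Fin m, 𝒴 j.succ) => U x ab.1 * Vt x ab.2) f)
        ≤ mutualInfo (jointMapOut p U f) + ∑ j : Fin m, ε j.succ :=
          step_compose p hp U (hW 0) Vt hVt f _ hεt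
      _ ≤ ε 0 + ∑ j : Fin m, ε j.succ := by
          have := hip 0 p hp
          linarith

end BasicCompositionAux

set_option maxHeartbeats 2000000 in
/-- basic composition, w.r.t. `ℙ`: if channel `j` satisfies
`ε_j`-information privacy with respect to `ℙ` for each `j ∈ [m]`, then the composed
channel `p(y|x) = ∏_j p(y_j|x)` satisfies: for every input distribution and every
coordinate `i`, `I(X_i; (Y_1,…,Y_m)) ≤ Σ_j ε_j`. -/
theorem basic_composition
    {n m : ℕ} {𝒳 : Fin n → Type*} [∀ i, Fintype (𝒳 i)] [∀ i, DecidableEq (𝒳 i)]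
    [∀ i, Nonempty (𝒳 i)] {𝒴 : Fin m → Type*} [∀ j, Fintype (𝒴 j)] [∀ j, Nonempty (𝒴 j)]
    (W : ∀ j, (∀ i, 𝒳 i) → 𝒴 j → ℝ) (hW : ∀ j, IsChannel (W j))
    (ε : Fin m → ℝ) (hε : ∀ j, 0 ≤ ε j)
    (hip : ∀ j, ∀ p, IsPMF p → ∀ i : Fin n,
      mutualInfo (jointMapOut p (W j) (fun x => x i)) ≤ ε j) :
    ∀ p, IsPMF p → ∀ i : Fin n,
      mutualInfo (jointMapOut p
          (fun x (y : ∀ j, 𝒴 j) => ∏ j, W j x (y j)) (fun x => x i)) ≤ ∑ j, ε j := by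
  intro p hp i
  have h := compose_bound (Ω := ∀ i, 𝒳 i) (γ := 𝒳 i) (fun x => x i) m 𝒴
    (fun j => inferInstance) W hW ε (fun j q hq => hip j q hq i) p hp
  exact h
end

section
/- Let 𝒳 = 𝒳^1 × 𝒳^2 where 𝒳^j = ∏_{i=1}^n 𝒳_i^j, let W_1(y_1|x^1) and W_2(y_2|x^2) be privacy channels on 𝒳^1 and 𝒳^2, and define the channels on 𝒳: U_1(y_1|x) = W_1(y_1|x^1) and U_2(y_2|x) = W_2(y_2|x^2). Suppose W_j satisfies ε_j-information privacy with respect to ℙ_b^j and is (b,δ_j)-balanced, for j ∈ {1,2}. Let K_1 = sup over joint input distributions Q on 𝒳 and i ∈ [n] of I(X_i^2; Y_1) (the information about a coordinate of the second dataset leaked through channel U_1) and K_2 = sup over joint input distributions Q on 𝒳 and i ∈ [n] of I(X_i^1; Y_2). Then the composition channel p(y|x) = W_1(y_1|x^1)W_2(y_2|x^2) satisfies: for every joint input distribution X on 𝒳 and every i ∈ [n], I(X_i; (Y_1,Y_2)) ≤ ε_1 + ε_2 + δ_1 + δ_2 + K_1 + K_2, where X_i = (X_i^1, X_i^2). -/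
open scoped BigOperators

/-!
Apply the chain rule twice, with `A = X_i¹` and `B = X_i²`:
`I((A, B); (Y₁, Y₂)) = I(A; Y₁) + I(B; Y₁ | A) + I(A; Y₂ | Y₁) + I(B; Y₂ | A, Y₁)`.
Because `Y₁` and `Y₂` are conditionally independent given `X`, each conditional law on the right
is the law of `(X_i^j, U_k(X))` for some reweighted input law, so the four terms are bounded by
`C₁(ℙ¹) = C₁(ℙ_b¹) + δ₁ ≤ ε₁ + δ₁`, `K₁`, `K₂` and `C₁(ℙ²) ≤ ε₂ + δ₂`.
-/

open Finset

/-- The pointwise chain rule; the bounds only serve to make every quantity positive once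
`x > 0`. -/
lemma mul_logb_chain {x T R K M L : ℝ} (hx : 0 ≤ x) (hT : x ≤ T) (hR : x ≤ R) (hK : x ≤ K)
    (hM : x ≤ M) (hL : x ≤ L) :
    x * Real.logb 2 (x * T / (R * K)) =
      x * Real.logb 2 (M * T / (R * L)) + x * Real.logb 2 (x * L / (M * K)) := by
  rcases hx.eq_or_lt with rfl | hx
  · simp
  have := hx.trans_le hT; have := hx.trans_le hR; have := hx.trans_le hK
  have := hx.trans_le hM; have := hx.trans_le hL
  rw [← mul_add, ← Real.logb_mul (by positivity) (by positivity)]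
  congr 2
  field_simp

section ScaledMutualInfo

variable {α β γ : Type*} [Fintype α] [Fintype β] [Fintype γ]

/-- `(∑ m) · I(m / ∑ m)`: in this unnormalised form a conditional mutual information is just the
sum of `scaledMutualInfo` over the values of the conditioning variable. -/
noncomputable def scaledMutualInfo (m : α × β → ℝ) : ℝ :=
  ∑ a, ∑ b, m (a, b) *
    Real.logb 2 (m (a, b) * (∑ z, m z) / ((∑ b', m (a, b')) * (∑ a', m (a', b))))

lemma scaledMutualInfo_eq_mutualInfo {m : α × β → ℝ} (hm : ∑ z, m z = 1) :
    scaledMutualInfo m = mutualInfo m := by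
  simp [scaledMutualInfo, mutualInfo, hm]

lemma scaledMutualInfo_of_sum_eq_zero {m : α × β → ℝ} (hm : ∑ z, m z = 0) :
    scaledMutualInfo m = 0 := by
  simp [scaledMutualInfo, hm]

lemma scaledMutualInfo_const_mul (m : α × β → ℝ) {c : ℝ} (hc : c ≠ 0) :
    scaledMutualInfo (fun z => c * m z) = c * scaledMutualInfo m := by
  have hcancel (x y z w : ℝ) : c * (x * (c * y)) / (c * (z * (c * w))) = x * y / (z * w) := by
    rw [show c * (x * (c * y)) = c * c * (x * y) by ring,
      show c * (z * (c * w)) = c * c * (z * w) by ring]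
    exact mul_div_mul_left _ _ (mul_ne_zero hc hc)
  simp only [scaledMutualInfo, ← Finset.mul_sum, mul_assoc, hcancel]

lemma scaledMutualInfo_comp_swap (m : α × β → ℝ) :
    scaledMutualInfo (fun z => m z.swap) = scaledMutualInfo m := by
  have htotal : ∑ z : β × α, m z.swap = ∑ z, m z := (Equiv.prodComm β α).sum_comp m
  rw [scaledMutualInfo, scaledMutualInfo, sum_comm, htotal]
  simp only [Prod.swap_prod_mk, mul_comm (∑ b', m (_, b'))]

/-- Chain rule `I(X; (Z, Y)) = I(X; Z) + I(X; Y | Z)`. -/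
lemma scaledMutualInfo_prod_right (m : α × (γ × β) → ℝ) (hm : ∀ z, 0 ≤ m z) :
    scaledMutualInfo m = scaledMutualInfo (fun z : α × γ => ∑ b, m (z.1, (z.2, b))) +
      ∑ c, scaledMutualInfo (fun z : α × β => m (z.1, (c, z.2))) := by
  have hT (z) : m z ≤ ∑ z', m z' := single_le_sum (f := m) (fun _ _ => hm _) (mem_univ z)
  have hR (a z) : m (a, z) ≤ ∑ z', m (a, z') :=
    single_le_sum (f := fun z' => m (a, z')) (fun _ _ => hm _) (mem_univ z)
  have hK (a z) : m (a, z) ≤ ∑ a', m (a', z) :=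
    single_le_sum (f := fun a' => m (a', z)) (fun _ _ => hm _) (mem_univ a)
  have hM (a c b) : m (a, (c, b)) ≤ ∑ b', m (a, (c, b')) :=
    single_le_sum (f := fun b' => m (a, (c, b'))) (fun _ _ => hm _) (mem_univ b)
  have hL (a c b) : m (a, (c, b)) ≤ ∑ z : α × β, m (z.1, (c, z.2)) :=
    single_le_sum (f := fun z : α × β => m (z.1, (c, z.2))) (fun _ _ => hm _) (mem_univ (a, b))
  unfold scaledMutualInfo
  simp only [Fintype.sum_prod_type, Prod.forall] at *
  rw [sum_comm (γ := γ), ← sum_add_distrib]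
  refine sum_congr rfl fun a _ => ?_
  rw [← sum_add_distrib]
  refine sum_congr rfl fun c _ => ?_
  rw [sum_mul, ← sum_add_distrib]
  exact sum_congr rfl fun b _ => mul_logb_chain (hm a c b) (hT a c b) (hR a c b) (hK a c b)
    (hM a c b) (hL a c b)

lemma scaledMutualInfo_prod_left (m : (γ × β) × α → ℝ) (hm : ∀ z, 0 ≤ m z) :
    scaledMutualInfo m = scaledMutualInfo (fun z : γ × α => ∑ b, m ((z.1, b), z.2)) +
      ∑ c, scaledMutualInfo (fun z : β × α => m ((c, z.1), z.2)) := by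
  rw [← scaledMutualInfo_comp_swap m, scaledMutualInfo_prod_right _ fun z => hm _]
  congr 1
  · exact scaledMutualInfo_comp_swap (fun z : γ × α => ∑ b, m ((z.1, b), z.2))
  · exact sum_congr rfl fun c _ => scaledMutualInfo_comp_swap (fun z : β × α => m ((c, z.1), z.2))

end ScaledMutualInfo

lemma IsChannel.prod {Ω 𝒴 𝒴' : Type*} [Fintype Ω] [Fintype 𝒴] [Fintype 𝒴']
    {U : Ω → 𝒴 → ℝ} {V : Ω → 𝒴' → ℝ} (hU : IsChannel U) (hV : IsChannel V) :
    IsChannel (fun x (y : 𝒴 × 𝒴') => U x y.1 * V x y.2) := fun x =>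
  ⟨fun y => mul_nonneg ((hU x).1 _) ((hV x).1 _), by
    rw [Fintype.sum_prod_type]
    simp only [← Finset.mul_sum, (hV x).2, mul_one, (hU x).2]⟩

lemma IsPMF.marginal_fst {α β : Type*} [Fintype α] [Fintype β] {q : α × β → ℝ} (hq : IsPMF q) :
    IsPMF (fun a => ∑ b, q (a, b)) :=
  ⟨fun _ => sum_nonneg fun _ _ => hq.1 _, by rw [← hq.2, Fintype.sum_prod_type]⟩

lemma IsPMF.marginal_snd {α β : Type*} [Fintype α] [Fintype β] {q : α × β → ℝ} (hq : IsPMF q) :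
    IsPMF (fun b => ∑ a, q (a, b)) :=
  ⟨fun _ => sum_nonneg fun _ _ => hq.1 _, by rw [← hq.2, Fintype.sum_prod_type_right]⟩

section JointMapOut

variable {Ω γ γ' 𝒴 𝒴' : Type*} [Fintype Ω] [Fintype γ] [DecidableEq γ] [Fintype γ']
  [DecidableEq γ'] [Fintype 𝒴] [Fintype 𝒴']

lemma jointMapOut_nonneg_s15 {p : Ω → ℝ} {U : Ω → 𝒴 → ℝ} (hp : ∀ x, 0 ≤ p x) (hU : IsChannel U)
    (f : Ω → γ) (z : γ × 𝒴) : 0 ≤ jointMapOut p U f z :=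
  sum_nonneg fun x _ => by
    split_ifs
    exacts [mul_nonneg (hp x) ((hU x).1 _), le_rfl]

lemma sum_jointMapOut (p : Ω → ℝ) {U : Ω → 𝒴 → ℝ} (hU : IsChannel U) (f : Ω → γ) :
    ∑ z, jointMapOut p U f z = ∑ x, p x := by
  simp only [jointMapOut]
  rw [sum_comm]
  refine sum_congr rfl fun x _ => ?_
  rw [Fintype.sum_prod_type]
  simp [← Finset.mul_sum, (hU x).2]

lemma jointMapOut_const_mul (c : ℝ) (p : Ω → ℝ) (U : Ω → 𝒴 → ℝ) (f : Ω → γ) :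
    jointMapOut (fun x => c * p x) U f = fun z => c * jointMapOut p U f z := by
  funext z
  simp only [jointMapOut, Finset.mul_sum, mul_ite, mul_zero, mul_assoc]

lemma sum_jointMapOut_prodChannel (p : Ω → ℝ) (U : Ω → 𝒴 → ℝ) {V : Ω → 𝒴' → ℝ}
    (hV : IsChannel V) (f : Ω → γ) (a : γ) (y : 𝒴) :
    ∑ y', jointMapOut p (fun x y => U x y.1 * V x y.2) f (a, (y, y')) =
      jointMapOut p U f (a, y) := by
  simp only [jointMapOut]
  rw [sum_comm]
  refine sum_congr rfl fun x _ => ?_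
  split_ifs
  · rw [← Finset.mul_sum, ← Finset.mul_sum, (hV x).2, mul_one]
  · exact sum_const_zero

lemma jointMapOut_prodChannel_apply (p : Ω → ℝ) (U : Ω → 𝒴 → ℝ) (V : Ω → 𝒴' → ℝ)
    (f : Ω → γ) (a : γ) (y : 𝒴) (y' : 𝒴') :
    jointMapOut p (fun x y => U x y.1 * V x y.2) f (a, (y, y')) =
      jointMapOut (fun x => p x * U x y) V f (a, y') := by
  simp only [jointMapOut, mul_assoc]

lemma sum_jointMapOut_pair (p : Ω → ℝ) (U : Ω → 𝒴 → ℝ) (f : Ω → γ) (g : Ω → γ')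
    (a : γ) (y : 𝒴) :
    ∑ b, jointMapOut p U (fun x => (f x, g x)) ((a, b), y) = jointMapOut p U f (a, y) := by
  simp only [jointMapOut, Prod.mk.injEq]
  rw [sum_comm]
  refine sum_congr rfl fun x _ => ?_
  by_cases hf : f x = a <;> simp [hf]

lemma jointMapOut_pair_apply (p : Ω → ℝ) (U : Ω → 𝒴 → ℝ) (f : Ω → γ) (g : Ω → γ')
    (a : γ) (b : γ') (y : 𝒴) :
    jointMapOut p U (fun x => (f x, g x)) ((a, b), y) =
      jointMapOut (fun x => if f x = a then p x else 0) U g (b, y) := by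
  simp only [jointMapOut, Prod.mk.injEq, ite_and, ite_mul, zero_mul]
  refine sum_congr rfl fun x _ => ?_
  split_ifs <;> rfl

end JointMapOut

section Marginal

variable {α β γ 𝒴 : Type*} [Fintype α] [Fintype β] [Fintype γ] [DecidableEq γ] [Fintype 𝒴]

lemma jointMapOut_comp_fst (q : α × β → ℝ) (U : α → 𝒴 → ℝ) (f : α → γ) :
    jointMapOut q (fun x y => U x.1 y) (fun x => f x.1) =
      jointMapOut (fun a => ∑ b, q (a, b)) U f := by
  funext z
  simp only [jointMapOut, Fintype.sum_prod_type, sum_mul]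
  refine sum_congr rfl fun a _ => ?_
  split_ifs <;> simp

lemma jointMapOut_comp_snd (q : α × β → ℝ) (U : β → 𝒴 → ℝ) (f : β → γ) :
    jointMapOut q (fun x y => U x.2 y) (fun x => f x.2) =
      jointMapOut (fun b => ∑ a, q (a, b)) U f := by
  funext z
  simp only [jointMapOut, Fintype.sum_prod_type_right, sum_mul]
  refine sum_congr rfl fun b _ => ?_
  split_ifs <;> simp

end Marginal

section Composition

variable {Ω γ γ' 𝒴 𝒴' : Type*} [Fintype Ω] [Fintype γ] [DecidableEq γ] [Fintype γ']
  [DecidableEq γ'] [Fintype 𝒴] [Fintype 𝒴']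

lemma scaledMutualInfo_jointMapOut_le {p : Ω → ℝ} {U : Ω → 𝒴 → ℝ} {f : Ω → γ} {S : ℝ}
    (hp : ∀ x, 0 ≤ p x) (hU : IsChannel U)
    (hS : ∀ q, IsPMF q → mutualInfo (jointMapOut q U f) ≤ S) :
    scaledMutualInfo (jointMapOut p U f) ≤ (∑ x, p x) * S := by
  rcases (sum_nonneg fun x _ => hp x).eq_or_lt with hc | hc
  · rw [← hc, zero_mul, scaledMutualInfo_of_sum_eq_zero (by rw [sum_jointMapOut p hU, ← hc])]
  set c := ∑ x, p x
  have hq : IsPMF fun x => c⁻¹ * p x :=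
    ⟨fun x => mul_nonneg (inv_nonneg.2 hc.le) (hp x), by
      rw [← Finset.mul_sum, inv_mul_cancel₀ hc.ne']⟩
  have hscale : jointMapOut p U f = fun z => c * jointMapOut (fun x => c⁻¹ * p x) U f z := by
    rw [jointMapOut_const_mul]
    simp only [← mul_assoc, mul_inv_cancel₀ hc.ne', one_mul]
  rw [hscale, scaledMutualInfo_const_mul _ hc.ne', scaledMutualInfo_eq_mutualInfo
    (by rw [sum_jointMapOut _ hU, hq.2])]
  exact mul_le_mul_of_nonneg_left (hS _ hq) hc.le

lemma scaledMutualInfo_jointMapOut_pair_le {p : Ω → ℝ} {U : Ω → 𝒴 → ℝ} {f : Ω → γ}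
    {g : Ω → γ'} {S T : ℝ} (hp : ∀ x, 0 ≤ p x) (hU : IsChannel U)
    (hf : ∀ q, IsPMF q → mutualInfo (jointMapOut q U f) ≤ S)
    (hg : ∀ q, IsPMF q → mutualInfo (jointMapOut q U g) ≤ T) :
    scaledMutualInfo (jointMapOut p U fun x => (f x, g x)) ≤ (∑ x, p x) * (S + T) := by
  rw [scaledMutualInfo_prod_left _ (jointMapOut_nonneg_s15 hp hU _)]
  simp only [sum_jointMapOut_pair]
  simp only [jointMapOut_pair_apply, Prod.mk.eta]
  have hcond (a : γ) := scaledMutualInfo_jointMapOut_le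
    (p := fun x => if f x = a then p x else 0) (fun x => by split_ifs; exacts [hp x, le_rfl]) hU hg
  have hmass : ∑ a, ∑ x, (if f x = a then p x else 0) = ∑ x, p x := by
    rw [sum_comm]
    simp
  calc _ ≤ (∑ x, p x) * S + ∑ a, (∑ x, if f x = a then p x else 0) * T :=
        add_le_add (scaledMutualInfo_jointMapOut_le hp hU hf) (sum_le_sum fun a _ => hcond a)
    _ = (∑ x, p x) * (S + T) := by rw [← sum_mul, hmass, mul_add]

theorem mutualInfo_jointMapOut_prodChannel_pair_le {p : Ω → ℝ} {U : Ω → 𝒴 → ℝ}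
    {V : Ω → 𝒴' → ℝ} {f : Ω → γ} {g : Ω → γ'} {S₁ S₂ S₃ S₄ : ℝ} (hp : IsPMF p)
    (hU : IsChannel U) (hV : IsChannel V)
    (h₁ : ∀ q, IsPMF q → mutualInfo (jointMapOut q U f) ≤ S₁)
    (h₂ : ∀ q, IsPMF q → mutualInfo (jointMapOut q U g) ≤ S₂)
    (h₃ : ∀ q, IsPMF q → mutualInfo (jointMapOut q V g) ≤ S₃)
    (h₄ : ∀ q, IsPMF q → mutualInfo (jointMapOut q V f) ≤ S₄) :
    mutualInfo (jointMapOut p (fun x (y : 𝒴 × 𝒴') => U x y.1 * V x y.2) fun x => (f x, g x)) ≤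
      S₁ + S₂ + S₃ + S₄ := by
  rw [← scaledMutualInfo_eq_mutualInfo (by rw [sum_jointMapOut _ (hU.prod hV), hp.2]),
    scaledMutualInfo_prod_right _ (jointMapOut_nonneg_s15 hp.1 (hU.prod hV) _)]
  simp only [sum_jointMapOut_prodChannel _ _ hV]
  simp only [jointMapOut_prodChannel_apply, Prod.mk.eta]
  have hfirst := scaledMutualInfo_jointMapOut_pair_le hp.1 hU h₁ h₂
  have hsecond (y : 𝒴) := scaledMutualInfo_jointMapOut_pair_le
    (p := fun x => p x * U x y) (fun x => mul_nonneg (hp.1 x) ((hU x).1 y)) hV h₄ h₃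
  have hmass : ∑ y, ∑ x, p x * U x y = 1 := by
    rw [sum_comm, ← hp.2]
    exact sum_congr rfl fun x _ => by rw [← Finset.mul_sum, (hU x).2, mul_one]
  calc _ ≤ 1 * (S₁ + S₂) + ∑ y, (∑ x, p x * U x y) * (S₄ + S₃) := by
        rw [← hp.2]
        exact add_le_add hfirst (sum_le_sum fun y _ => hsecond y)
    _ = S₁ + S₂ + S₃ + S₄ := by rw [← sum_mul, hmass]; ring

end Composition

lemma mul_logb_div_mul_le {x r c : ℝ} (hx : 0 ≤ x) (hr : x ≤ r) (hc : x ≤ c) :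
    x * Real.logb 2 (x / (r * c)) ≤ x / c / Real.log 2 := by
  rcases hx.eq_or_lt with rfl | hx
  · simp
  have hr0 := hx.trans_le hr
  have hc0 := hx.trans_le hc
  rw [Real.logb, mul_div_assoc', div_le_div_iff_of_pos_right (Real.log_pos one_lt_two)]
  calc x * Real.log (x / (r * c)) ≤ x * (x / (r * c) - 1) :=
        mul_le_mul_of_nonneg_left (Real.log_le_sub_one_of_pos (by positivity)) hx.le
    _ ≤ x / r * (x / c) := by rw [div_mul_div_comm, mul_sub, mul_div_assoc']; linarith
    _ ≤ 1 * (x / c) := by gcongr; exact (div_le_one hr0).2 hr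
    _ = x / c := one_mul _

lemma mutualInfo_le_card_div_log_two {α β : Type*} [Fintype α] [Fintype β] {j : α × β → ℝ}
    (hj : ∀ z, 0 ≤ j z) : mutualInfo j ≤ Fintype.card β / Real.log 2 := by
  have hcol (b : β) : ∑ a, j (a, b) / (∑ a', j (a', b)) / Real.log 2 ≤ 1 / Real.log 2 := by
    rw [← sum_div, ← sum_div]
    gcongr
    exact div_self_le_one _
  calc mutualInfo j ≤ ∑ a, ∑ b, j (a, b) / (∑ a', j (a', b)) / Real.log 2 :=
        sum_le_sum fun a _ => sum_le_sum fun b _ => mul_logb_div_mul_le (hj _)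
          (single_le_sum (f := fun b' => j (a, b')) (fun _ _ => hj _) (mem_univ b))
          (single_le_sum (f := fun a' => j (a', b)) (fun _ _ => hj _) (mem_univ a))
    _ ≤ ∑ _b : β, 1 / Real.log 2 := by rw [sum_comm]; exact sum_le_sum fun b _ => hcol b
    _ = Fintype.card β / Real.log 2 := by simp [div_eq_mul_inv]

lemma bddAbove_mutualInfo_jointMapOut {Ω ι 𝒴 : Type*} {γ : ι → Type*} [Fintype Ω]
    [∀ i, Fintype (γ i)] [∀ i, DecidableEq (γ i)] [Fintype 𝒴] (P : (Ω → ℝ) → Prop)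
    (hP : ∀ q, P q → IsPMF q) {U : Ω → 𝒴 → ℝ} (hU : IsChannel U) (F : (i : ι) → Ω → γ i) :
    BddAbove {r | ∃ q, P q ∧ ∃ i, r = mutualInfo (jointMapOut q U (F i))} := by
  refine ⟨Fintype.card 𝒴 / Real.log 2, ?_⟩
  rintro r ⟨q, hq, i, rfl⟩
  exact mutualInfo_le_card_div_log_two (jointMapOut_nonneg_s15 (hP q hq).1 hU _)

lemma mutualInfo_le_indCap {n : ℕ} {𝒳 : Fin n → Type*} [∀ i, Fintype (𝒳 i)]
    [∀ i, DecidableEq (𝒳 i)] {𝒴 : Type*} [Fintype 𝒴] {W : (∀ i, 𝒳 i) → 𝒴 → ℝ}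
    (hW : IsChannel W) {p : (∀ i, 𝒳 i) → ℝ} (hp : IsPMF p) (i : Fin n) :
    mutualInfo (jointMapOut p W fun x => x i) ≤ indCap W (allPMF (∀ i, 𝒳 i)) :=
  le_csSup (bddAbove_mutualInfo_jointMapOut (· ∈ allPMF _) (fun _ h => h) hW fun j x => x j)
    ⟨p, hp, i, rfl⟩

theorem general_composition_privacy_general
    {n : ℕ} {A B : Fin n → Type*} [∀ i, Fintype (A i)] [∀ i, Fintype (B i)]
    [∀ i, DecidableEq (A i)] [∀ i, DecidableEq (B i)]
    {𝒴₁ 𝒴₂ : Type*} [Fintype 𝒴₁] [Fintype 𝒴₂]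
    (W₁ : (∀ i, A i) → 𝒴₁ → ℝ) (hW₁ : IsChannel W₁)
    (W₂ : (∀ i, B i) → 𝒴₂ → ℝ) (hW₂ : IsChannel W₂)
    (b ε₁ ε₂ δ₁ δ₂ K₁ K₂ : ℝ)
    (hip₁ : indCap W₁ (PMFb (∀ i, A i) b) ≤ ε₁)
    (hip₂ : indCap W₂ (PMFb (∀ i, B i) b) ≤ ε₂)
    (hbal₁ : indCap W₁ (allPMF (∀ i, A i)) = indCap W₁ (PMFb (∀ i, A i) b) + δ₁)
    (hbal₂ : indCap W₂ (allPMF (∀ i, B i)) = indCap W₂ (PMFb (∀ i, B i) b) + δ₂)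
    (hK₁ : K₁ = sSup {r | ∃ q : (∀ i, A i) × (∀ i, B i) → ℝ, IsPMF q ∧ ∃ i : Fin n,
      r = mutualInfo (jointMapOut q (fun x y₁ => W₁ x.1 y₁) (fun x => x.2 i))})
    (hK₂ : K₂ = sSup {r | ∃ q : (∀ i, A i) × (∀ i, B i) → ℝ, IsPMF q ∧ ∃ i : Fin n,
      r = mutualInfo (jointMapOut q (fun x y₂ => W₂ x.2 y₂) (fun x => x.1 i))}) :
    ∀ p : (∀ i, A i) × (∀ i, B i) → ℝ, IsPMF p → ∀ i : Fin n,
      mutualInfo (jointMapOut p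
          (fun x (y : 𝒴₁ × 𝒴₂) => W₁ x.1 y.1 * W₂ x.2 y.2)
          (fun x => (x.1 i, x.2 i))) ≤ ε₁ + ε₂ + δ₁ + δ₂ + K₁ + K₂ := by
  intro p hp i
  have hU₁ : IsChannel fun (x : (∀ i, A i) × (∀ i, B i)) y => W₁ x.1 y := fun x => hW₁ x.1
  have hU₂ : IsChannel fun (x : (∀ i, A i) × (∀ i, B i)) y => W₂ x.2 y := fun x => hW₂ x.2
  have hown₁ (q : (∀ i, A i) × (∀ i, B i) → ℝ) (hq : IsPMF q) :
      mutualInfo (jointMapOut q (fun x y => W₁ x.1 y) fun x => x.1 i) ≤ ε₁ + δ₁ := by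
    have := mutualInfo_le_indCap hW₁ hq.marginal_fst i
    rw [← jointMapOut_comp_fst] at this
    linarith
  have hown₂ (q : (∀ i, A i) × (∀ i, B i) → ℝ) (hq : IsPMF q) :
      mutualInfo (jointMapOut q (fun x y => W₂ x.2 y) fun x => x.2 i) ≤ ε₂ + δ₂ := by
    have := mutualInfo_le_indCap hW₂ hq.marginal_snd i
    rw [← jointMapOut_comp_snd] at this
    linarith
  have hcross₁ (q : (∀ i, A i) × (∀ i, B i) → ℝ) (hq : IsPMF q) :
      mutualInfo (jointMapOut q (fun x y => W₁ x.1 y) fun x => x.2 i) ≤ K₁ :=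
    hK₁ ▸ le_csSup (bddAbove_mutualInfo_jointMapOut _ (fun _ h => h) hU₁ fun j x => x.2 j)
      ⟨q, hq, i, rfl⟩
  have hcross₂ (q : (∀ i, A i) × (∀ i, B i) → ℝ) (hq : IsPMF q) :
      mutualInfo (jointMapOut q (fun x y => W₂ x.2 y) fun x => x.1 i) ≤ K₂ :=
    hK₂ ▸ le_csSup (bddAbove_mutualInfo_jointMapOut _ (fun _ h => h) hU₂ fun j x => x.1 j)
      ⟨q, hq, i, rfl⟩
  linarith [mutualInfo_jointMapOut_prodChannel_pair_le hp hU₁ hU₂ hown₁ hcross₁ hown₂ hcross₂]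

/-- Theorem 3: general composition. If `W_j` satisfies
`ε_j`-information privacy w.r.t. `ℙ_b^j` and is `(b,δ_j)`-balanced (`j = 1,2`), and
`K₁` (resp. `K₂`) is the sup over joint input distributions on `𝒳 = 𝒳¹ × 𝒳²` and
coordinates `i` of the information `I(X_i²; Y₁)` leaked through `U₁(y₁|x) = W₁(y₁|x¹)`
(resp. `I(X_i¹; Y₂)` through `U₂(y₂|x) = W₂(y₂|x²)`), then the composition channel
`p(y|x) = W₁(y₁|x¹)W₂(y₂|x²)` satisfies, for every joint input distribution and every
individual `i`, `I(X_i; (Y₁,Y₂)) ≤ ε₁ + ε₂ + δ₁ + δ₂ + K₁ + K₂`. -/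
theorem general_composition_privacy
    {n : ℕ} {A B : Fin n → Type*} [∀ i, Fintype (A i)] [∀ i, Fintype (B i)]
    [∀ i, DecidableEq (A i)] [∀ i, DecidableEq (B i)]
    [∀ i, Nonempty (A i)] [∀ i, Nonempty (B i)]
    {𝒴₁ 𝒴₂ : Type*} [Fintype 𝒴₁] [Fintype 𝒴₂] [Nonempty 𝒴₁] [Nonempty 𝒴₂]
    (W₁ : (∀ i, A i) → 𝒴₁ → ℝ) (hW₁ : IsChannel W₁)
    (W₂ : (∀ i, B i) → 𝒴₂ → ℝ) (hW₂ : IsChannel W₂)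
    (b ε₁ ε₂ δ₁ δ₂ K₁ K₂ : ℝ) (hb : 0 ≤ b)
    (hip₁ : indCap W₁ (PMFb (∀ i, A i) b) ≤ ε₁)
    (hip₂ : indCap W₂ (PMFb (∀ i, B i) b) ≤ ε₂)
    (hbal₁ : indCap W₁ (allPMF (∀ i, A i)) = indCap W₁ (PMFb (∀ i, A i) b) + δ₁)
    (hbal₂ : indCap W₂ (allPMF (∀ i, B i)) = indCap W₂ (PMFb (∀ i, B i) b) + δ₂)
    (hK₁ : K₁ = sSup {r | ∃ q : (∀ i, A i) × (∀ i, B i) → ℝ, IsPMF q ∧ ∃ i : Fin n,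
      r = mutualInfo (jointMapOut q (fun x y₁ => W₁ x.1 y₁) (fun x => x.2 i))})
    (hK₂ : K₂ = sSup {r | ∃ q : (∀ i, A i) × (∀ i, B i) → ℝ, IsPMF q ∧ ∃ i : Fin n,
      r = mutualInfo (jointMapOut q (fun x y₂ => W₂ x.2 y₂) (fun x => x.1 i))}) :
    ∀ p : (∀ i, A i) × (∀ i, B i) → ℝ, IsPMF p → ∀ i : Fin n,
      mutualInfo (jointMapOut p
          (fun x (y : 𝒴₁ × 𝒴₂) => W₁ x.1 y.1 * W₂ x.2 y.2)
          (fun x => (x.1 i, x.2 i))) ≤ ε₁ + ε₂ + δ₁ + δ₂ + K₁ + K₂ :=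
  general_composition_privacy_general W₁ hW₁ W₂ hW₂ b ε₁ ε₂ δ₁ δ₂ K₁ K₂ hip₁ hip₂ hbal₁ hbal₂ hK₁
    hK₂
end
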